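/- arXiv:2303.04937 — 4 statements merged into one kernel-verified Lean document; each statement's English description precedes it below -/
import Mathlib

section
/- Let X ⊂ ℝⁿ be an open set containing the closed ball of radius r > 0 centered at 0. Let u : X → ℝ be convex with u ≥ 0 and u(0) = 0, suppose u is differentiable at the point r e₁, and suppose h := sup_{‖x‖ ≤ r} u(x) is positive and attained at r e₁, i.e. h = u(r e₁). Define σ(x) := (h/(2r)) (x¹ + r), where x¹ = ⟨x, e₁⟩. Then the set S := {x ∈ X : u(x) < σ(x)} is contained in the slab {x : −r ≤ x¹ ≤ r}. -/
open MeasureTheory RealInnerProductSpace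

noncomputable section

/-!
At `a = r e₁` the function `u` is maximal on the sphere of radius `r`, so its derivative there
vanishes on `e₁ᗮ` and the supporting hyperplane of `u` at `a` depends on `x¹` only. Evaluating the
supporting inequality at `0`, where `u = 0`, shows that its slope is at least `h / r`; hence
`u x ≥ h x¹ / r ≥ σ x` as soon as `x¹ ≥ r`. On the other side, `σ x < 0 ≤ u x` when `x¹ < -r`.
-/

theorem ConvexOn.add_apply_sub_le_of_hasFDerivAt {E : Type*} [NormedAddCommGroup E]
    [NormedSpace ℝ E] {X : Set E} {u : E → ℝ} (hu : ConvexOn ℝ X u) {a b : E}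
    (ha : a ∈ X) (hb : b ∈ X) {g : E →L[ℝ] ℝ} (hg : HasFDerivAt u g a) :
    u a + g (b - a) ≤ u b := by
  let m : ℝ →ᵃ[ℝ] E := AffineMap.lineMap a b
  have hslope := (hu.comp_affineMap m).le_slope_of_hasDerivAt
    (by simpa [m] using ha) (by simpa [m] using hb) one_pos
    (hg.comp_hasDerivAt_of_eq 0 AffineMap.hasDerivAt_lineMap (by simp [m]))
  have : slope (u ∘ m) 0 1 = u b - u a := by simp [slope_def_field, m]
  linarith

section Sphere

variable {E : Type*} [NormedAddCommGroup E] [InnerProductSpace ℝ E]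

theorem norm_cos_smul_add_sin_smul {a v : E} (hav : ⟪a, v⟫ = 0) (hv : ‖v‖ = ‖a‖) (θ : ℝ) :
    ‖Real.cos θ • a + Real.sin θ • v‖ = ‖a‖ := by
  have hsq : ‖Real.cos θ • a + Real.sin θ • v‖ ^ 2 = ‖a‖ ^ 2 := by
    rw [norm_add_sq_real, real_inner_smul_left, real_inner_smul_right, hav, norm_smul,
      norm_smul, hv, Real.norm_eq_abs, Real.norm_eq_abs, mul_pow, mul_pow, sq_abs, sq_abs]
    linear_combination ‖a‖ ^ 2 * Real.cos_sq_add_sin_sq θ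
  exact (pow_left_inj₀ (norm_nonneg _) (norm_nonneg _) two_ne_zero).mp hsq

theorem hasDerivAt_cos_smul_add_sin_smul (a v : E) :
    HasDerivAt (fun θ => Real.cos θ • a + Real.sin θ • v) v 0 := by
  convert ((Real.hasDerivAt_cos 0).smul_const a).add ((Real.hasDerivAt_sin 0).smul_const v) using 1
  · rfl
  · simp

theorem IsMaxOn.hasFDerivAt_apply_eq_zero_of_inner_eq_zero {f : E → ℝ} {a w : E}
    {g : E →L[ℝ] ℝ} (hmax : IsMaxOn f (Metric.sphere 0 ‖a‖) a) (hg : HasFDerivAt f g a)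
    (ha : a ≠ 0) (haw : ⟪a, w⟫ = 0) : g w = 0 := by
  rcases eq_or_ne w 0 with rfl | hw
  · simp
  -- `f` has a local maximum at `0` along the great circle through `a` in the direction of `w`
  set v := (‖a‖ / ‖w‖) • w with hv
  have hvnorm : ‖v‖ = ‖a‖ := by
    rw [norm_smul, Real.norm_eq_abs, abs_of_nonneg (by positivity),
      div_mul_cancel₀ _ (norm_ne_zero_iff.mpr hw)]
  have hav : ⟪a, v⟫ = 0 := by rw [real_inner_smul_right, haw, mul_zero]
  have hlocal : IsLocalMax (fun θ => f (Real.cos θ • a + Real.sin θ • v)) 0 :=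
    Filter.Eventually.of_forall fun θ => by
      simpa using hmax (by simpa using norm_cos_smul_add_sin_smul hav hvnorm θ)
  have hgv : g v = 0 := hlocal.hasDerivAt_eq_zero
    (hg.comp_hasDerivAt_of_eq 0 (hasDerivAt_cos_smul_add_sin_smul a v) (by simp))
  rw [hv, map_smul, smul_eq_mul, mul_eq_zero] at hgv
  exact hgv.resolve_left (by positivity)

theorem ContinuousLinearMap.apply_eq_inner_div_mul_of_forall_inner_eq_zero {g : E →L[ℝ] ℝ}
    {a : E} (ha : a ≠ 0) (hg : ∀ w, ⟪a, w⟫ = 0 → g w = 0) (y : E) :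
    g y = ⟪y, a⟫ / ‖a‖ ^ 2 * g a := by
  set c := ⟪y, a⟫ / ‖a‖ ^ 2
  have horth : ⟪a, y - c • a⟫ = 0 := by
    rw [inner_sub_right, real_inner_smul_right, real_inner_self_eq_norm_sq, real_inner_comm,
      div_mul_cancel₀ _ (by positivity), sub_self]
  have := hg _ horth
  rwa [map_sub, map_smul, smul_eq_mul, sub_eq_zero] at this

theorem ConvexOn.inner_div_mul_le_of_isMaxOn_sphere {X : Set E} {u : E → ℝ}
    (hu : ConvexOn ℝ X u) (h0X : 0 ∈ X) (hu0 : u 0 ≤ 0) {a : E} (haX : a ∈ X) (ha : a ≠ 0)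
    (hmax : IsMaxOn u (Metric.sphere 0 ‖a‖) a) {g : E →L[ℝ] ℝ} (hg : HasFDerivAt u g a)
    {x : E} (hxX : x ∈ X) (hxa : ‖a‖ ^ 2 ≤ ⟪x, a⟫) :
    ⟪x, a⟫ / ‖a‖ ^ 2 * u a ≤ u x := by
  have hga : u a ≤ g a := by
    have := hu.add_apply_sub_le_of_hasFDerivAt haX h0X hg
    rw [zero_sub, map_neg] at this
    linarith
  have hgx : g (x - a) = ⟪x - a, a⟫ / ‖a‖ ^ 2 * g a :=
    g.apply_eq_inner_div_mul_of_forall_inner_eq_zero ha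
      (fun _ => hmax.hasFDerivAt_apply_eq_zero_of_inner_eq_zero hg ha) _
  have hs : 0 ≤ ⟪x - a, a⟫ / ‖a‖ ^ 2 := by
    rw [inner_sub_left, real_inner_self_eq_norm_sq]
    exact div_nonneg (sub_nonneg.mpr hxa) (sq_nonneg _)
  have hsplit : ⟪x, a⟫ / ‖a‖ ^ 2 = 1 + ⟪x - a, a⟫ / ‖a‖ ^ 2 := by
    rw [inner_sub_left, real_inner_self_eq_norm_sq, sub_div, div_self (by positivity)]
    ring
  calc ⟪x, a⟫ / ‖a‖ ^ 2 * u a = u a + ⟪x - a, a⟫ / ‖a‖ ^ 2 * u a := by rw [hsplit]; ring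
    _ ≤ u a + g (x - a) := by rw [hgx]; gcongr
    _ ≤ u x := hu.add_apply_sub_le_of_hasFDerivAt haX hxX hg

end Sphere

/-- **Slab containment.** If `u ≥ 0` is convex on an open set `X ⊇ closedBall 0 r`,
`u 0 = 0`, `u` is differentiable at `r e₁`, and `h := sup_{‖x‖ ≤ r} u > 0` is attained
at `r e₁`, then the section `S = {u < σ}` cut off by `σ(x) = (h/2r)(x¹ + r)` lies in
the slab `{|x¹| ≤ r}`. -/
theorem slab_containment {n : ℕ} (hn : 1 ≤ n)
    (X : Set (EuclideanSpace ℝ (Fin n))) (hXopen : IsOpen X)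
    (r : ℝ) (hr : 0 < r) (hball : Metric.closedBall 0 r ⊆ X)
    (u : EuclideanSpace ℝ (Fin n) → ℝ)
    (hu_convex : ConvexOn ℝ X u)
    (hu_nonneg : ∀ x ∈ X, 0 ≤ u x)
    (hu0 : u 0 = 0)
    (e₁ : EuclideanSpace ℝ (Fin n)) (he₁ : e₁ = EuclideanSpace.single ⟨0, hn⟩ 1)
    (hdiff : DifferentiableAt ℝ u (r • e₁))
    (h : ℝ) (hh : h = sSup (u '' Metric.closedBall 0 r)) (hhpos : 0 < h)
    (hattained : h = u (r • e₁))
    (σ : EuclideanSpace ℝ (Fin n) → ℝ)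
    (hσ : ∀ x, σ x = h / (2 * r) * (⟪x, e₁⟫ + r)) :
    {x ∈ X | u x < σ x} ⊆ {x | |⟪x, e₁⟫| ≤ r} := by
  have hnorm : ‖r • e₁‖ = r := by simp [he₁, norm_smul, hr.le]
  have ha : r • e₁ ≠ 0 := norm_ne_zero_iff.mp (by rw [hnorm]; exact hr.ne')
  have hbdd : BddAbove (u '' Metric.closedBall 0 r) :=
    (isCompact_closedBall 0 r).bddAbove_image ((hu_convex.continuousOn hXopen).mono hball)
  have hmax : IsMaxOn u (Metric.sphere 0 ‖r • e₁‖) (r • e₁) := fun y hy => by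
    rw [hnorm] at hy
    show u y ≤ u (r • e₁)
    rw [← hattained, hh]
    exact le_csSup hbdd (Set.mem_image_of_mem u (Metric.sphere_subset_closedBall hy))
  rintro x ⟨hxX, hxσ⟩
  rw [hσ] at hxσ
  have hrh : 0 < h / (2 * r) := by positivity
  refine (abs_le (a := ⟪x, e₁⟫)).mpr ⟨?_, ?_⟩
  · nlinarith [hu_nonneg x hxX]
  · by_contra! hxr
    have hgrowth : r * ⟪x, e₁⟫ / r ^ 2 * h ≤ u x := by
      have := hu_convex.inner_div_mul_le_of_isMaxOn_sphere (hball (by simp [hr.le])) hu0.le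
        (hball (by simp [hnorm])) ha hmax hdiff.hasFDerivAt hxX
        (by rw [real_inner_smul_right, hnorm]; nlinarith)
      rwa [real_inner_smul_right, hnorm, ← hattained] at this
    have hgap : r * ⟪x, e₁⟫ / r ^ 2 * h - h / (2 * r) * (⟪x, e₁⟫ + r)
        = h * (⟪x, e₁⟫ - r) / (2 * r) := by
      field_simp
      ring
    have : 0 < h * (⟪x, e₁⟫ - r) / (2 * r) := by have := sub_pos.mpr hxr; positivity
    linarith

end
end

section
/- Let S ⊂ ℝⁿ be a bounded set, let x₀ ∈ S, and let ν ∈ ℝⁿ be a unit vector such that ⟨ν, x − x₀⟩ ≤ 0 for all x ∈ S (i.e. ν is the outer normal of a hyperplane supporting S at x₀). Suppose ⟨ν, e₁⟩ ≥ 1/2 and ‖ν − ⟨ν,e₁⟩ e₁‖ ≤ s. Then every x ∈ S satisfies ⟨x, e₁⟩ ≤ ⟨x₀, e₁⟩ + 2 s · diam(S). -/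
open RealInnerProductSpace

section

variable {E : Type*} [NormedAddCommGroup E] [InnerProductSpace ℝ E]

lemma mul_inner_le_norm_sub_smul_mul_norm {ν e y : E} (hy : ⟪ν, y⟫ ≤ 0) (a : ℝ) :
    a * ⟪e, y⟫ ≤ ‖ν - a • e‖ * ‖y‖ := by
  have hsplit : ⟪ν, y⟫ = ⟪ν - a • e, y⟫ + a * ⟪e, y⟫ := by
    simp only [inner_sub_left, real_inner_smul_left]
    ring
  have hcs : -⟪ν - a • e, y⟫ ≤ ‖ν - a • e‖ * ‖y‖ :=
    (neg_le_abs _).trans (abs_real_inner_le_norm _ _)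
  linarith

lemma mul_inner_sub_le_of_supporting {S : Set E} (hS : Bornology.IsBounded S) {x₀ ν e : E}
    (hx₀ : x₀ ∈ S) (hsupport : ∀ x ∈ S, ⟪ν, x - x₀⟫ ≤ 0) {c s : ℝ} (hc : 0 < c)
    (hcν : c ≤ ⟪ν, e⟫) (hs : ‖ν - ⟪ν, e⟫ • e‖ ≤ s) {x : E} (hx : x ∈ S) :
    c * ⟪e, x - x₀⟫ ≤ s * Metric.diam S := by
  have hdist : ‖x - x₀‖ ≤ Metric.diam S := by
    simpa only [dist_eq_norm] using Metric.dist_le_diam_of_mem hS hx hx₀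
  have hs₀ : 0 ≤ s := (norm_nonneg _).trans hs
  rcases le_or_gt ⟪e, x - x₀⟫ 0 with hneg | hpos
  · have : c * ⟪e, x - x₀⟫ ≤ 0 := mul_nonpos_of_nonneg_of_nonpos hc.le hneg
    exact this.trans (mul_nonneg hs₀ Metric.diam_nonneg)
  · calc c * ⟪e, x - x₀⟫ ≤ ⟪ν, e⟫ * ⟪e, x - x₀⟫ := by gcongr
      _ ≤ ‖ν - ⟪ν, e⟫ • e‖ * ‖x - x₀‖ :=
        mul_inner_le_norm_sub_smul_mul_norm (hsupport x hx) _
      _ ≤ s * Metric.diam S := mul_le_mul hs hdist (norm_nonneg _) hs₀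

end

theorem support_plane_slab_general {n : ℕ}
    (S : Set (EuclideanSpace ℝ (Fin n))) (hSbdd : Bornology.IsBounded S)
    (x₀ : EuclideanSpace ℝ (Fin n)) (hx₀ : x₀ ∈ S)
    (ν : EuclideanSpace ℝ (Fin n))
    (hsupport : ∀ x ∈ S, ⟪ν, x - x₀⟫ ≤ 0)
    (e₁ : EuclideanSpace ℝ (Fin n))
    (hν₁ : 1 / 2 ≤ ⟪ν, e₁⟫)
    (s : ℝ) (hs : ‖ν - ⟪ν, e₁⟫ • e₁‖ ≤ s) :
    ∀ x ∈ S, ⟪x, e₁⟫ ≤ ⟪x₀, e₁⟫ + 2 * s * Metric.diam S := by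
  intro x hx
  have hslab := mul_inner_sub_le_of_supporting hSbdd hx₀ hsupport (by norm_num) hν₁ hs hx
  rw [inner_sub_right, real_inner_comm x e₁, real_inner_comm x₀ e₁] at hslab
  linarith

/-- **Supporting hyperplane with almost-axial normal.** If a bounded set `S` has at
`x₀ ∈ S` a supporting hyperplane with unit outer normal `ν` satisfying `⟨ν,e₁⟩ ≥ 1/2`
and `‖ν - ⟨ν,e₁⟩e₁‖ ≤ s`, then every `x ∈ S` has `⟨x,e₁⟩ ≤ ⟨x₀,e₁⟩ + 2 s diam S`. -/
theorem support_plane_slab {n : ℕ} (hn : 1 ≤ n)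
    (S : Set (EuclideanSpace ℝ (Fin n))) (hSbdd : Bornology.IsBounded S)
    (x₀ : EuclideanSpace ℝ (Fin n)) (hx₀ : x₀ ∈ S)
    (ν : EuclideanSpace ℝ (Fin n)) (hν : ‖ν‖ = 1)
    (hsupport : ∀ x ∈ S, ⟪ν, x - x₀⟫ ≤ 0)
    (e₁ : EuclideanSpace ℝ (Fin n)) (he₁ : e₁ = EuclideanSpace.single ⟨0, hn⟩ 1)
    (hν₁ : 1 / 2 ≤ ⟪ν, e₁⟫)
    (s : ℝ) (hs : ‖ν - ⟪ν, e₁⟫ • e₁‖ ≤ s) :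
    ∀ x ∈ S, ⟪x, e₁⟫ ≤ ⟪x₀, e₁⟫ + 2 * s * Metric.diam S :=
  support_plane_slab_general S hSbdd x₀ hx₀ ν hsupport e₁ hν₁ s hs
end

section
/- Let X, Y ⊂ ℝⁿ be bounded open sets, b : X̄ × Ȳ → ℝ of class C³ satisfying B1 and B3, with Y(x,p) the inverse of y ↦ b_x(x,y). Fix y₀ ∈ Ȳ and suppose the map Φ : x ↦ b_y(x,y₀) is a diffeomorphism from X onto a convex open set X̃ ⊂ ℝⁿ. Let ε ≥ 0 and let u : X → ℝ be C² with ∇u(x) ∈ b_x(x,Ȳ) and D²u(x) ≥ D²_{xx} b(x, Y(x,∇u(x))) + ε I (as symmetric matrices) for all x ∈ X. Define ũ : X̃ → ℝ by ũ(x̃) := u(Φ⁻¹(x̃)) − b(Φ⁻¹(x̃), y₀). Then ũ is convex on X̃; moreover, if ε > 0 there is δ > 0 (depending on ε and on a positive lower bound for |det b_{xy}| and an upper bound for ‖b‖_{C²}) such that x̃ ↦ ũ(x̃) − (δ/2)|x̃|² is convex. -/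
open MeasureTheory RealInnerProductSpace

noncomputable section

variable {n : ℕ}

/-- The differential `b_x(x,y)` of the benefit `b` in the `x` variable, as a vector. -/
def bX (b : EuclideanSpace ℝ (Fin n) → EuclideanSpace ℝ (Fin n) → ℝ)
    (x y : EuclideanSpace ℝ (Fin n)) : EuclideanSpace ℝ (Fin n) :=
  gradient (fun x' => b x' y) x

/-- The differential `b_y(x,y)` of the benefit `b` in the `y` variable, as a vector. -/
def bYd (b : EuclideanSpace ℝ (Fin n) → EuclideanSpace ℝ (Fin n) → ℝ)
    (x y : EuclideanSpace ℝ (Fin n)) : EuclideanSpace ℝ (Fin n) :=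
  gradient (fun y' => b x y') y

/-- The Hessian `D²_{xx} b(x,y)` in the `x` variable, as a continuous linear map. -/
def Hxx (b : EuclideanSpace ℝ (Fin n) → EuclideanSpace ℝ (Fin n) → ℝ)
    (x y : EuclideanSpace ℝ (Fin n)) :
    EuclideanSpace ℝ (Fin n) →L[ℝ] EuclideanSpace ℝ (Fin n) :=
  fderiv ℝ (fun x' => bX b x' y) x

/-- `f` is a (smooth) diffeomorphism of `s` onto its range: it is smooth on `s`,
and admits an inverse on `s` which is smooth on `f '' s`. -/
def IsDiffeoOnto (f : EuclideanSpace ℝ (Fin n) → EuclideanSpace ℝ (Fin n))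
    (s : Set (EuclideanSpace ℝ (Fin n))) : Prop :=
  ContDiffOn ℝ (⊤ : ℕ∞) f s ∧ ∃ g, Set.LeftInvOn g f s ∧ ContDiffOn ℝ (⊤ : ℕ∞) g (f '' s)

/-- Condition B1: `y ↦ b_x(x₀,y)` and `x ↦ b_y(x,y₀)` are diffeomorphisms onto
their ranges. -/
def CondB1 (b : EuclideanSpace ℝ (Fin n) → EuclideanSpace ℝ (Fin n) → ℝ)
    (X Y : Set (EuclideanSpace ℝ (Fin n))) : Prop :=
  (∀ x₀ ∈ closure X, IsDiffeoOnto (fun y => bX b x₀ y) (closure Y)) ∧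
  (∀ y₀ ∈ closure Y, IsDiffeoOnto (fun x => bYd b x y₀) (closure X))

/-- Condition B2: the sets `b_x(x₀, Ȳ)` and `b_y(X̄, y₀)` are convex. -/
def CondB2 (b : EuclideanSpace ℝ (Fin n) → EuclideanSpace ℝ (Fin n) → ℝ)
    (X Y : Set (EuclideanSpace ℝ (Fin n))) : Prop :=
  (∀ x₀ ∈ closure X, Convex ℝ ((fun y => bX b x₀ y) '' closure Y)) ∧
  (∀ y₀ ∈ closure Y, Convex ℝ ((fun x => bYd b x y₀) '' closure X))

/-- `Ymap` is the inverse of `y ↦ b_x(x,y)`: `Y(x, b_x(x,y)) = y` on `Ȳ`, and for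
`p ∈ b_x(x,Ȳ)`, `Y(x,p) ∈ Ȳ` with `b_x(x, Y(x,p)) = p`. -/
def IsYmap (b : EuclideanSpace ℝ (Fin n) → EuclideanSpace ℝ (Fin n) → ℝ)
    (X Y : Set (EuclideanSpace ℝ (Fin n)))
    (Ymap : EuclideanSpace ℝ (Fin n) → EuclideanSpace ℝ (Fin n) → EuclideanSpace ℝ (Fin n)) :
    Prop :=
  ∀ x ∈ closure X, (∀ y ∈ closure Y, Ymap x (bX b x y) = y) ∧
    ∀ p ∈ (fun y => bX b x y) '' closure Y, Ymap x p ∈ closure Y ∧ bX b x (Ymap x p) = p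

/-- Condition B3: for every `x ∈ X̄` and direction `ξ`, the function
`p ↦ ⟨ξ, D²_{xx} b(x, Y(x,p)) ξ⟩` is convex on `b_x(x, Ȳ)`. -/
def CondB3 (b : EuclideanSpace ℝ (Fin n) → EuclideanSpace ℝ (Fin n) → ℝ)
    (X Y : Set (EuclideanSpace ℝ (Fin n)))
    (Ymap : EuclideanSpace ℝ (Fin n) → EuclideanSpace ℝ (Fin n) → EuclideanSpace ℝ (Fin n)) :
    Prop :=
  ∀ x ∈ closure X, ∀ ξ : EuclideanSpace ℝ (Fin n),
    ConvexOn ℝ ((fun y => bX b x y) '' closure Y) (fun p => ⟪ξ, Hxx b x (Ymap x p) ξ⟫)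

/-- `u` is `b`-convex on `X`: it is a supremum of `b`-affine functions. -/
def BConvexOn (b : EuclideanSpace ℝ (Fin n) → EuclideanSpace ℝ (Fin n) → ℝ)
    (X Y : Set (EuclideanSpace ℝ (Fin n))) (u : EuclideanSpace ℝ (Fin n) → ℝ) : Prop :=
  ∃ v : EuclideanSpace ℝ (Fin n) → ℝ,
    ∀ x ∈ X, u x = sSup ((fun y => b x y - v y) '' closure Y)


open InnerProductSpace Set Filter
local notation "E" => EuclideanSpace ℝ (Fin n)

/-- The inverse of `toDual` as a genuinely `ℝ`-linear continuous map. -/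
def fromDualR (n : ℕ) : StrongDual ℝ (EuclideanSpace ℝ (Fin n)) →L[ℝ] EuclideanSpace ℝ (Fin n) where
  toFun := fun ℓ => (toDual ℝ (EuclideanSpace ℝ (Fin n))).symm ℓ
  map_add' := fun a b => map_add _ a b
  map_smul' := fun r a => by
    have := (toDual ℝ (EuclideanSpace ℝ (Fin n))).symm.map_smulₛₗ r a
    simpa using this
  cont := (toDual ℝ (EuclideanSpace ℝ (Fin n))).symm.continuous

lemma gradient_eq_fromDualR (f : E → ℝ) (x : E) :
    gradient f x = fromDualR n (fderiv ℝ f x) := rfl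

lemma inner_bX_eq (b : E → E → ℝ) (x y v : E) :
    ⟪bX b x y, v⟫ = fderiv ℝ (fun x' => b x' y) x v := toDual_symm_apply

lemma contDiffAt_gradient_of_three {f : E → ℝ} {x : E} (hf : ContDiffAt ℝ 3 f x) :
    ContDiffAt ℝ 2 (gradient f) x := by
  have h := hf.fderiv_right (m := 2) (by norm_num)
  exact (fromDualR n).contDiff.contDiffAt.comp x h

section slices

variable {X Y : Set (EuclideanSpace ℝ (Fin n))} {b : EuclideanSpace ℝ (Fin n) → EuclideanSpace ℝ (Fin n) → ℝ}

lemma sliceX_contDiffOn (hb : ContDiffOn ℝ 3 (Function.uncurry b) (closure X ×ˢ closure Y))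
    {y : E} (hy : y ∈ closure Y) :
    ContDiffOn ℝ 3 (fun x' => b x' y) (closure X) :=
  hb.comp ((contDiff_id.prodMk contDiff_const).contDiffOn) (fun _ hx => ⟨hx, hy⟩)

lemma sliceX_contDiffAt (hXopen : IsOpen X)
    (hb : ContDiffOn ℝ 3 (Function.uncurry b) (closure X ×ˢ closure Y))
    {x y : E} (hx : x ∈ X) (hy : y ∈ closure Y) :
    ContDiffAt ℝ 3 (fun x' => b x' y) x :=
  (sliceX_contDiffOn hb hy).contDiffAt
    (Filter.mem_of_superset (hXopen.mem_nhds hx) subset_closure)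

lemma bXfun_contDiffAt (hXopen : IsOpen X)
    (hb : ContDiffOn ℝ 3 (Function.uncurry b) (closure X ×ˢ closure Y))
    {x y : E} (hx : x ∈ X) (hy : y ∈ closure Y) :
    ContDiffAt ℝ 2 (fun x' => bX b x' y) x :=
  contDiffAt_gradient_of_three (sliceX_contDiffAt hXopen hb hx hy)

lemma bXfun_hasFDerivAt (hXopen : IsOpen X)
    (hb : ContDiffOn ℝ 3 (Function.uncurry b) (closure X ×ˢ closure Y))
    {x y : E} (hx : x ∈ X) (hy : y ∈ closure Y) :
    HasFDerivAt (fun x' => bX b x' y) (Hxx b x y) x :=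
  ((bXfun_contDiffAt hXopen hb hx hy).differentiableAt (by norm_num)).hasFDerivAt

/-- first derivative of `t ↦ b (c t) y` along a curve. -/
lemma hasDerivAt_b_curve (hXopen : IsOpen X)
    (hb : ContDiffOn ℝ 3 (Function.uncurry b) (closure X ×ˢ closure Y))
    {c : ℝ → E} {ξ : E} {t : ℝ} (hc : HasDerivAt c ξ t) (hcX : c t ∈ X)
    {y : E} (hy : y ∈ closure Y) :
    HasDerivAt (fun s => b (c s) y) ⟪bX b (c t) y, ξ⟫ t := by
  have hdiff : DifferentiableAt ℝ (fun x' => b x' y) (c t) :=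
    (sliceX_contDiffAt hXopen hb hcX hy).differentiableAt (by norm_num)
  have h := (hdiff.hasFDerivAt.comp_hasDerivAt t hc)
  rw [inner_bX_eq]
  exact h

/-- first derivative of `t ↦ bX b (c t) y` along a curve. -/
lemma hasDerivAt_bX_curve (hXopen : IsOpen X)
    (hb : ContDiffOn ℝ 3 (Function.uncurry b) (closure X ×ˢ closure Y))
    {c : ℝ → E} {ξ : E} {t : ℝ} (hc : HasDerivAt c ξ t) (hcX : c t ∈ X)
    {y : E} (hy : y ∈ closure Y) :
    HasDerivAt (fun s => bX b (c s) y) (Hxx b (c t) y ξ) t :=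
  (bXfun_hasFDerivAt hXopen hb hcX hy).comp_hasDerivAt t hc

/-- second derivative of `t ↦ b (c t) y` along a curve: derivative of
`t ↦ ⟪bX b (c t) y, dc t⟫`. -/
lemma hasDerivAt_inner_bX_curve (hXopen : IsOpen X)
    (hb : ContDiffOn ℝ 3 (Function.uncurry b) (closure X ×ˢ closure Y))
    {c dc : ℝ → E} {ξ w : E} {t : ℝ} (hc : HasDerivAt c ξ t) (hcX : c t ∈ X)
    (hdc : HasDerivAt dc w t) {y : E} (hy : y ∈ closure Y) :
    HasDerivAt (fun s => ⟪bX b (c s) y, dc s⟫)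
      (⟪bX b (c t) y, w⟫ + ⟪Hxx b (c t) y ξ, dc t⟫) t :=
  HasDerivAt.inner ℝ (hasDerivAt_bX_curve hXopen hb hc hcX hy) hdc

end slices



/-- On an open set `U` whose compact superset `K` carries a `C^⊤` structure for `f`,
the (full) derivative of `f` is bounded on `U`. -/
lemma exists_fderiv_bound {f : EuclideanSpace ℝ (Fin n) → EuclideanSpace ℝ (Fin n)}
    {K U : Set (EuclideanSpace ℝ (Fin n))} (hK : IsCompact K) (hU : IsOpen U) (hUK : U ⊆ K)
    (hf : ContDiffOn ℝ (⊤ : ℕ∞) f K) :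
    ∃ C : ℝ, 0 ≤ C ∧ ∀ x ∈ U, ‖fderiv ℝ f x‖ ≤ C := by
  have loc : ∀ x ∈ K, ∃ V : Set (EuclideanSpace ℝ (Fin n)), IsOpen V ∧ x ∈ V ∧
      ∃ c : ℝ, ∀ x' ∈ U ∩ V, ‖fderiv ℝ f x'‖ ≤ c := by
    intro x hx
    have hx1 : ContDiffWithinAt ℝ (1 : ℕ) f K x := (hf x hx).of_le (by simp)
    obtain ⟨u, hu_mem, p, hp⟩ := contDiffWithinAt_nat.1 hx1
    rw [mem_nhdsWithin] at hu_mem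
    obtain ⟨V, hVopen, hxV, hVsub⟩ := hu_mem
    obtain ⟨r, hr, hball⟩ := Metric.isOpen_iff.1 hVopen x hxV
    refine ⟨Metric.ball x (r/2), Metric.isOpen_ball, Metric.mem_ball_self (by positivity), ?_⟩
    have hcomp : IsCompact (K ∩ Metric.closedBall x (r/2)) :=
      hK.inter_right Metric.isClosed_closedBall
    have hsub : K ∩ Metric.closedBall x (r/2) ⊆ u := by
      intro z hz
      exact hVsub ⟨hball (Metric.mem_ball.2 (lt_of_le_of_lt (Metric.mem_closedBall.1 hz.2)
        (by linarith))), Set.mem_insert_of_mem _ hz.1⟩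
    have hcont : ContinuousOn (fun z => ‖p z 1‖) (K ∩ Metric.closedBall x (r/2)) :=
      ((hp.cont 1 le_rfl).mono hsub).norm
    obtain ⟨c, hc⟩ := (hcomp.bddAbove_image hcont)
    refine ⟨c, fun x' hx' => ?_⟩
    have hx'K : x' ∈ K := hUK hx'.1
    have hx'cb : x' ∈ Metric.closedBall x (r/2) :=
      Metric.mem_closedBall.2 (le_of_lt (Metric.mem_ball.1 hx'.2))
    have hx'u : x' ∈ u := hsub ⟨hx'K, hx'cb⟩
    have hfd : HasFDerivWithinAt f
        (continuousMultilinearCurryFin1 ℝ (EuclideanSpace ℝ (Fin n)) (EuclideanSpace ℝ (Fin n)) (p x' 1)) u x' :=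
      hp.hasFDerivWithinAt (by norm_num) hx'u
    have hnb : u ∈ nhds x' := by
      have hsub2 : U ∩ Metric.ball x r ⊆ u := fun z hz =>
        hVsub ⟨hball hz.2, Set.mem_insert_of_mem _ (hUK hz.1)⟩
      refine Filter.mem_of_superset ((hU.inter Metric.isOpen_ball).mem_nhds
        ⟨hx'.1, Metric.mem_ball.2 (lt_of_lt_of_le (Metric.mem_ball.1 hx'.2) (by linarith))⟩) hsub2
    have heq : fderiv ℝ f x' =
        continuousMultilinearCurryFin1 ℝ (EuclideanSpace ℝ (Fin n)) (EuclideanSpace ℝ (Fin n)) (p x' 1) :=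
      (hfd.hasFDerivAt hnb).fderiv
    rw [heq]
    have : ‖continuousMultilinearCurryFin1 ℝ (EuclideanSpace ℝ (Fin n)) (EuclideanSpace ℝ (Fin n)) (p x' 1)‖
        = ‖p x' 1‖ := LinearIsometryEquiv.norm_map _ _
    rw [this]
    exact hc (Set.mem_image_of_mem _ ⟨hx'K, hx'cb⟩)
  choose V hVopen hxV c hc using loc
  obtain ⟨t, hcov⟩ := hK.elim_nhds_subcover' (fun x hx => V x hx)
    (fun x hx => (hVopen x hx).mem_nhds (hxV x hx))
  rcases t.eq_empty_or_nonempty with rfl | hne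
  · refine ⟨0, le_rfl, fun x hx => absurd (hcov (hUK hx)) (by simp)⟩
  · refine ⟨max 0 (t.sup' hne fun i => c i.1 i.2), le_max_left _ _, fun x hx => ?_⟩
    obtain ⟨i, hit, hxV⟩ := Set.mem_iUnion₂.1 (hcov (hUK hx))
    refine le_trans (hc i.1 i.2 x ⟨hx, hxV⟩) (le_trans (Finset.le_sup' (fun i => c i.1 i.2) hit) (le_max_right _ _))



lemma convexOn_affine_Icc (c d : ℝ) : ConvexOn ℝ (Set.Icc (0:ℝ) 1) (fun s => c + s * d) := by
  refine ⟨convex_Icc _ _, fun x _ y _ a b ha hb hab => ?_⟩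
  simp only [smul_eq_mul]
  exact le_of_eq (by linear_combination (-c) * hab)

/-- A convex function on `[0,1]` with vanishing right derivative at `0` satisfies `N 0 ≤ N 1`. -/
lemma le_of_convexOn_hasDerivWithinAt_zero {N : ℝ → ℝ}
    (hconv : ConvexOn ℝ (Set.Icc (0:ℝ) 1) N)
    (hder : HasDerivWithinAt N 0 (Set.Icc (0:ℝ) 1) 0) : N 0 ≤ N 1 := by
  have hslope : Filter.Tendsto (slope N 0) (nhdsWithin 0 (Set.Icc (0:ℝ) 1 \ {0})) (nhds 0) :=
    hasDerivWithinAt_iff_tendsto_slope.1 hder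
  have hne : (nhdsWithin (0:ℝ) (Set.Icc (0:ℝ) 1 \ {0})).NeBot := by
    apply mem_closure_iff_nhdsWithin_neBot.1
    have hsub : Set.Ioo (0:ℝ) 1 ⊆ Set.Icc (0:ℝ) 1 \ {0} := fun z hz =>
      ⟨⟨le_of_lt hz.1, le_of_lt hz.2⟩, ne_of_gt hz.1⟩
    refine closure_mono hsub ?_
    rw [closure_Ioo one_ne_zero.symm]
    exact ⟨le_refl _, zero_le_one⟩
  have hub : ∀ᶠ s in nhdsWithin (0:ℝ) (Set.Icc (0:ℝ) 1 \ {0}), slope N 0 s ≤ N 1 - N 0 := by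
    refine Filter.eventually_of_mem self_mem_nhdsWithin (fun s hs => ?_)
    have hs0 : 0 < s := lt_of_le_of_ne hs.1.1 (Ne.symm (by simpa using hs.2))
    have hcomb := hconv.2 (Set.left_mem_Icc.2 zero_le_one) (Set.right_mem_Icc.2 zero_le_one)
      (show (0:ℝ) ≤ 1 - s by linarith [hs.1.2]) (le_of_lt hs0) (by ring)
    simp only [smul_eq_mul, mul_zero, mul_one, zero_add] at hcomb
    rw [slope_def_field, sub_zero]
    rw [div_le_iff₀ hs0]
    linarith
  have := le_of_tendsto hslope hub
  linarith

section ucurve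
variable {X : Set (EuclideanSpace ℝ (Fin n))} {u : EuclideanSpace ℝ (Fin n) → ℝ}

lemma hasDerivAt_u_curve (hXopen : IsOpen X) (hu : ContDiffOn ℝ 2 u X)
    {c : ℝ → E} {ξ : E} {t : ℝ} (hc : HasDerivAt c ξ t) (hcX : c t ∈ X) :
    HasDerivAt (fun s => u (c s)) ⟪gradient u (c t), ξ⟫ t := by
  have hat : ContDiffAt ℝ 2 u (c t) := hu.contDiffAt (hXopen.mem_nhds hcX)
  have hdiff : DifferentiableAt ℝ u (c t) := hat.differentiableAt (by norm_num)
  have h := hdiff.hasFDerivAt.comp_hasDerivAt t hc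
  have h2 : ⟪gradient u (c t), ξ⟫ = fderiv ℝ u (c t) ξ := toDual_symm_apply
  rw [h2]; exact h

lemma hasDerivAt_gradu_curve (hXopen : IsOpen X) (hu : ContDiffOn ℝ 2 u X)
    {c : ℝ → E} {ξ : E} {t : ℝ} (hc : HasDerivAt c ξ t) (hcX : c t ∈ X) :
    HasDerivAt (fun s => gradient u (c s)) (fderiv ℝ (gradient u) (c t) ξ) t := by
  have hat : ContDiffAt ℝ 2 u (c t) := hu.contDiffAt (hXopen.mem_nhds hcX)
  have h1 : ContDiffAt ℝ 1 (gradient u) (c t) := by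
    have h := hat.fderiv_right (m := 1) (by norm_num)
    exact (fromDualR n).contDiff.contDiffAt.comp _ h
  exact ((h1.differentiableAt one_ne_zero).hasFDerivAt).comp_hasDerivAt t hc


end ucurve

set_option maxHeartbeats 8000000 in
/-- **Lemma 1(i): convexification by the coordinate change `x̃ = b_y(x,y₀)`.** If `u`
is (uniformly) `b`-convex in the differential sense, i.e. `∇u(x) ∈ b_x(x,Ȳ)` and
`D²u(x) ≥ D²_{xx}b(x,Y(x,∇u(x))) + εI`, and `Φ = b_y(·,y₀)` maps `X` diffeomorphically
onto a convex open set `X̃`, then `ũ(x̃) = u(Φ⁻¹(x̃)) − b(Φ⁻¹(x̃),y₀)` is convex on `X̃`,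
and uniformly convex (for some modulus `δ > 0`) when `ε > 0`. -/
theorem coordinate_change_convexifies {n : ℕ}
    (X Y : Set (EuclideanSpace ℝ (Fin n)))
    (hXopen : IsOpen X) (hXbdd : Bornology.IsBounded X)
    (hYopen : IsOpen Y) (hYbdd : Bornology.IsBounded Y)
    (b : EuclideanSpace ℝ (Fin n) → EuclideanSpace ℝ (Fin n) → ℝ)
    (hb : ContDiffOn ℝ 3 (Function.uncurry b) (closure X ×ˢ closure Y))
    (hB1 : CondB1 b X Y)
    (Ymap : EuclideanSpace ℝ (Fin n) → EuclideanSpace ℝ (Fin n) → EuclideanSpace ℝ (Fin n))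
    (hY : IsYmap b X Y Ymap)
    (hB3 : CondB3 b X Y Ymap)
    (y₀ : EuclideanSpace ℝ (Fin n)) (hy₀ : y₀ ∈ closure Y)
    (Φ Ψ : EuclideanSpace ℝ (Fin n) → EuclideanSpace ℝ (Fin n))
    (hΦ : ∀ x, Φ x = bYd b x y₀)
    (Xt : Set (EuclideanSpace ℝ (Fin n)))
    (hXt : Φ '' X = Xt) (hXt_open : IsOpen Xt) (hXt_conv : Convex ℝ Xt)
    (hΦinj : Set.InjOn Φ X) (hΨ : Set.LeftInvOn Ψ Φ X)
    (hΨ_smooth : ContDiffOn ℝ 1 Ψ Xt)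
    (ε : ℝ) (hε : 0 ≤ ε)
    (u : EuclideanSpace ℝ (Fin n) → ℝ) (hu_C2 : ContDiffOn ℝ 2 u X)
    (hgrad : ∀ x ∈ X, gradient u x ∈ (fun y => bX b x y) '' closure Y)
    (hhess : ∀ x ∈ X, ∀ ξ : EuclideanSpace ℝ (Fin n),
      ⟪ξ, Hxx b x (Ymap x (gradient u x)) ξ⟫ + ε * ‖ξ‖ ^ 2 ≤
        ⟪ξ, fderiv ℝ (gradient u) x ξ⟫) :
    ConvexOn ℝ Xt (fun z => u (Ψ z) - b (Ψ z) y₀) ∧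
    (0 < ε → ∃ δ : ℝ, 0 < δ ∧
      ConvexOn ℝ Xt (fun z => u (Ψ z) - b (Ψ z) y₀ - δ / 2 * ‖z‖ ^ 2)) := by
  classical
  have hKc : IsCompact (closure X) :=
    Metric.isCompact_of_isClosed_isBounded isClosed_closure hXbdd.closure
  have hΦfun : (fun x => bYd b x y₀) = Φ := funext fun x => (hΦ x).symm
  obtain ⟨hΦsm', gΦ, hgΦinv, hgΦsm⟩ := hB1.2 y₀ hy₀
  rw [hΦfun] at hΦsm' hgΦinv hgΦsm
  have hXtsub : Xt ⊆ Φ '' closure X := by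
    rw [← hXt]; exact Set.image_mono subset_closure
  have hΨXt : ∀ z ∈ Xt, Ψ z ∈ X ∧ Φ (Ψ z) = z := by
    intro z hz
    rw [← hXt] at hz; obtain ⟨x, hxX, rfl⟩ := hz
    rw [hΨ hxX]; exact ⟨hxX, rfl⟩
  have hΨsm : ContDiffOn ℝ (⊤ : ℕ∞) Ψ Xt := by
    refine (hgΦsm.mono hXtsub).congr ?_
    intro z hz
    rw [← hXt] at hz; obtain ⟨x, hxX, rfl⟩ := hz
    rw [hΨ hxX, hgΦinv (subset_closure hxX)]
  obtain ⟨C, hC0, hC⟩ := exists_fderiv_bound hKc hXopen subset_closure hΦsm'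
  have core : ∀ δ : ℝ, 0 ≤ δ → (δ = 0 ∨ δ * C ^ 2 ≤ ε) →
      ConvexOn ℝ Xt (fun z => u (Ψ z) - b (Ψ z) y₀ - δ / 2 * ‖z‖ ^ 2) := by
    intro δ hδ hδc
    refine ⟨hXt_conv, ?_⟩
    intro z₀ hz₀ z₁ hz₁ a₂ b₂ ha₂ hb₂ hab₂
    rcases eq_or_ne z₀ z₁ with rfl | hzz
    · have hzeq : a₂ • z₀ + b₂ • z₀ = z₀ := by rw [← add_smul, hab₂, one_smul]
      rw [hzeq]
      simp only [smul_eq_mul]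
      exact le_of_eq (by linear_combination (-(u (Ψ z₀) - b (Ψ z₀) y₀ - δ/2*‖z₀‖^2)) * hab₂)
    · set v := z₁ - z₀ with hv
      have hvne : v ≠ 0 := sub_ne_zero.2 (Ne.symm hzz)
      set ζ : ℝ → EuclideanSpace ℝ (Fin n) := fun t => z₀ + t • v with hζdef
      have hζmem : ∀ t ∈ Icc (0:ℝ) 1, ζ t ∈ Xt := by
        intro t ht
        have h := hXt_conv hz₀ hz₁ (by linarith [ht.2] : (0:ℝ) ≤ 1 - t) ht.1 (by ring)
        have heq : ζ t = (1-t) • z₀ + t • z₁ := by rw [hζdef]; simp only [hv]; module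
        rw [heq]; exact h
      set γ : ℝ → EuclideanSpace ℝ (Fin n) := fun t => Ψ (ζ t) with hγdef
      have hζsm : ContDiff ℝ (⊤ : ℕ∞) ζ := contDiff_const.add (contDiff_id.smul contDiff_const)
      have hγX : ∀ t ∈ Icc (0:ℝ) 1, γ t ∈ X := fun t ht => (hΨXt _ (hζmem t ht)).1
      have hΦγ : ∀ t ∈ Icc (0:ℝ) 1, Φ (γ t) = ζ t := fun t ht => (hΨXt _ (hζmem t ht)).2
      have hγC : ∀ t ∈ Icc (0:ℝ) 1, ContDiffAt ℝ (⊤ : ℕ∞) γ t := fun t ht =>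
        (hΨsm.contDiffAt (hXt_open.mem_nhds (hζmem t ht))).comp t hζsm.contDiffAt
      set dγ := deriv γ with hdγdef
      have hdγ : ∀ t ∈ Icc (0:ℝ) 1, HasDerivAt γ (dγ t) t := fun t ht =>
        ((hγC t ht).differentiableAt (by simp)).hasDerivAt
      have hζd : ∀ t : ℝ, HasDerivAt ζ v t := by
        intro t
        have h := ((hasDerivAt_id t).smul_const v).const_add z₀
        simp only [one_smul] at h
        exact h
      have hdγdiff : ∀ t ∈ Icc (0:ℝ) 1, DifferentiableAt ℝ dγ t := by
        intro t ht
        have h2 : ContDiffAt ℝ 2 γ t := (hγC t ht).of_le (WithTop.coe_le_coe.2 le_top)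
        have h1 : ContDiffAt ℝ 1 (fderiv ℝ γ) t := h2.fderiv_right (by norm_num)
        have hfd : DifferentiableAt ℝ (fun s => fderiv ℝ γ s 1) t :=
          (h1.differentiableAt one_ne_zero).clm_apply (differentiableAt_const _)
        exact hfd
      set g : ℝ → ℝ := fun t => u (γ t) - b (γ t) y₀ - δ/2 * ‖ζ t‖^2 with hgdef
      set G1 : ℝ → ℝ := fun t => (⟪gradient u (γ t), dγ t⟫ - ⟪bX b (γ t) y₀, dγ t⟫)
        - δ/2 * (⟪ζ t, v⟫ + ⟪v, ζ t⟫) with hG1def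
      have hg1 : ∀ t ∈ Icc (0:ℝ) 1, HasDerivAt g (G1 t) t := by
        intro t ht
        have h1 := hasDerivAt_u_curve hXopen hu_C2 (hdγ t ht) (hγX t ht)
        have h2 := hasDerivAt_b_curve hXopen hb (hdγ t ht) (hγX t ht) hy₀
        have h3 : HasDerivAt (fun s => ‖ζ s‖^2) (⟪ζ t, v⟫ + ⟪v, ζ t⟫) t := by
          have hi := HasDerivAt.inner ℝ (hζd t) (hζd t)
          refine HasDerivAt.congr_of_eventuallyEq hi ?_
          exact Filter.Eventually.of_forall fun s => (real_inner_self_eq_norm_sq _).symm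
        exact (h1.sub h2).sub (h3.const_mul (δ/2))
      have hg2 : ∀ t₀ ∈ Ioo (0:ℝ) 1, ∃ q : ℝ, HasDerivAt G1 q t₀ ∧ 0 ≤ q := by
        intro t₀ ht₀
        have ht₀I : t₀ ∈ Icc (0:ℝ) 1 := Ioo_subset_Icc_self ht₀
        set x := γ t₀ with hxdef
        have hxX : x ∈ X := hγX t₀ ht₀I
        have hxC : x ∈ closure X := subset_closure hxX
        set ξ := dγ t₀ with hξdef
        set w := deriv dγ t₀ with hwdef
        have hw : HasDerivAt dγ w t₀ := (hdγdiff t₀ ht₀I).hasDerivAt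
        have hHuterm : HasDerivAt (fun t => ⟪gradient u (γ t), dγ t⟫)
            (⟪gradient u x, w⟫ + ⟪fderiv ℝ (gradient u) x ξ, ξ⟫) t₀ :=
          HasDerivAt.inner ℝ (hasDerivAt_gradu_curve hXopen hu_C2 (hdγ t₀ ht₀I) hxX) hw
        have hbterm := hasDerivAt_inner_bX_curve hXopen hb (hdγ t₀ ht₀I) hxX hw hy₀
        have hζterm : HasDerivAt (fun t => ⟪ζ t, v⟫ + ⟪v, ζ t⟫) (⟪v, v⟫ + ⟪v, v⟫) t₀ := by
          have h1 := HasDerivAt.inner ℝ (hζd t₀) (hasDerivAt_const t₀ v)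
          have h2 := HasDerivAt.inner ℝ (hasDerivAt_const t₀ v) (hζd t₀)
          have h := h1.add h2
          simp only [inner_zero_right, inner_zero_left, add_zero, zero_add] at h
          exact h
        refine ⟨((⟪gradient u x, w⟫ + ⟪fderiv ℝ (gradient u) x ξ, ξ⟫)
          - (⟪bX b x y₀, w⟫ + ⟪Hxx b x y₀ ξ, ξ⟫)) - δ/2 * (⟪v, v⟫ + ⟪v, v⟫),
          (hHuterm.sub hbterm).sub (hζterm.const_mul (δ/2)), ?_⟩
        -- the genuinely mathematical part
        -- Set up the dual segment and the curve `β` in `closure Y`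
        set p₀ := bX b x y₀ with hp₀def
        set p₁ := gradient u x with hp₁def
        have hYx := hY x hxC
        have hp₀S : p₀ ∈ (fun y => bX b x y) '' closure Y := ⟨y₀, hy₀, rfl⟩
        have hp₁S : p₁ ∈ (fun y => bX b x y) '' closure Y := hgrad x hxX
        have hB3x := hB3 x hxC ξ
        have hSconv : Convex ℝ ((fun y => bX b x y) '' closure Y) := hB3x.1
        set pseg : ℝ → EuclideanSpace ℝ (Fin n) := fun s => p₀ + s • (p₁ - p₀) with hpsegdef
        have hpsegS : ∀ s ∈ Icc (0:ℝ) 1, pseg s ∈ (fun y => bX b x y) '' closure Y := by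
          intro s hs
          have h := hSconv hp₀S hp₁S (by linarith [hs.2] : (0:ℝ) ≤ 1 - s) hs.1 (by ring)
          have heq : pseg s = (1-s) • p₀ + s • p₁ := by simp only [hpsegdef]; module
          rw [heq]; exact h
        set β : ℝ → EuclideanSpace ℝ (Fin n) := fun s => Ymap x (pseg s) with hβdef
        have hβY : ∀ s ∈ Icc (0:ℝ) 1, β s ∈ closure Y := fun s hs => (hYx.2 _ (hpsegS s hs)).1
        have hbXβ : ∀ s ∈ Icc (0:ℝ) 1, bX b x (β s) = pseg s := fun s hs => (hYx.2 _ (hpsegS s hs)).2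
        have hpseg0 : pseg 0 = p₀ := by simp [hpsegdef]
        have hpseg1 : pseg 1 = p₁ := by simp [hpsegdef]
        have hβ0 : β 0 = y₀ := by
          show Ymap x (pseg 0) = y₀
          rw [hpseg0, hp₀def]
          exact hYx.1 y₀ hy₀
        have hβ1 : β 1 = Ymap x p₁ := by
          show Ymap x (pseg 1) = Ymap x p₁
          rw [hpseg1]
        -- smoothness of β
        obtain ⟨hbXsm, gx, hgxinv, hgxsm⟩ := hB1.1 x hxC
        have hYmapSm : ContDiffOn ℝ (⊤ : ℕ∞) (Ymap x) ((fun y => bX b x y) '' closure Y) := by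
          refine hgxsm.congr ?_
          rintro p ⟨y, hyY, rfl⟩
          rw [hYx.1 y hyY, hgxinv hyY]
        have hβsm : ContDiffOn ℝ (⊤ : ℕ∞) β (Icc (0:ℝ) 1) := by
          have hpsm : ContDiff ℝ (⊤ : ℕ∞) pseg := contDiff_const.add (contDiff_id.smul contDiff_const)
          exact hYmapSm.comp hpsm.contDiffOn (fun s hs => hpsegS s hs)
        set η := derivWithin β (Icc (0:ℝ) 1) 0 with hηdef
        have hβd : HasDerivWithinAt β η (Icc (0:ℝ) 1) 0 :=
          ((hβsm.differentiableOn (by simp)) 0 (Set.left_mem_Icc.2 zero_le_one)).hasDerivWithinAt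
        -- the two-variable function and its within-derivatives
        set Ω : Set (ℝ × ℝ) := Ioo (0:ℝ) 1 ×ˢ Icc (0:ℝ) 1 with hΩdef
        have hΩU : UniqueDiffOn ℝ Ω := (isOpen_Ioo.uniqueDiffOn).prod (uniqueDiffOn_Icc zero_lt_one)
        have hzstar : ((t₀, (0:ℝ)) : ℝ × ℝ) ∈ Ω := ⟨ht₀, Set.left_mem_Icc.2 zero_le_one⟩
        have hγsm : ContDiffOn ℝ (⊤ : ℕ∞) γ (Ioo (0:ℝ) 1) := fun t ht =>
          (hγC t (Ioo_subset_Icc_self ht)).contDiffWithinAt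
        have hmsm : ContDiffOn ℝ 3 (fun q : ℝ × ℝ => b (γ q.1) (β q.2)) Ω := by
          have hF : ContDiffOn ℝ (⊤ : ℕ∞) (fun q : ℝ × ℝ => (γ q.1, β q.2)) Ω := by
            refine ContDiffOn.prodMk ?_ ?_
            · exact hγsm.comp (contDiff_fst.contDiffOn) (fun q hq => hq.1)
            · exact hβsm.comp (contDiff_snd.contDiffOn) (fun q hq => hq.2)
          exact hb.comp (hF.of_le (WithTop.coe_le_coe.2 le_top))
            (fun q hq => ⟨subset_closure (hγX q.1 (Ioo_subset_Icc_self hq.1)), hβY q.2 hq.2⟩)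
        have hclint : Ω ⊆ closure (interior Ω) := by
          intro z hz
          rw [hΩdef] at hz
          have h1 : interior Ω = Ioo (0:ℝ) 1 ×ˢ Ioo (0:ℝ) 1 := by
            rw [hΩdef, interior_prod_eq, interior_Ioo, interior_Icc]
          rw [h1, closure_prod_eq, closure_Ioo (by norm_num : (0:ℝ) ≠ 1)]
          exact ⟨Ioo_subset_Icc_self hz.1, hz.2⟩
        have hSym1 : ∀ z ∈ Ω, IsSymmSndFDerivWithinAt ℝ (fun q : ℝ × ℝ => b (γ q.1) (β q.2)) Ω z :=
          fun z hz => (hmsm z hz).isSymmSndFDerivWithinAt (by norm_num) hΩU (hclint hz) hz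
        set D1 := fderivWithin ℝ (fun q : ℝ × ℝ => b (γ q.1) (β q.2)) Ω with hD1def
        have hD1sm : ContDiffOn ℝ 2 D1 Ω := hmsm.fderivWithin hΩU (by norm_num)
        have hSym2 : IsSymmSndFDerivWithinAt ℝ D1 Ω (t₀, 0) :=
          (hD1sm (t₀, 0) hzstar).isSymmSndFDerivWithinAt (by norm_num) hΩU (hclint hzstar) hzstar
        set D2 := fderivWithin ℝ D1 Ω with hD2def
        have hD2sm : ContDiffOn ℝ 1 D2 Ω := hD1sm.fderivWithin hΩU (by norm_num)
        set D3 := fderivWithin ℝ D2 Ω with hD3def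
        have hmdW : ∀ z ∈ Ω, HasFDerivWithinAt (fun q : ℝ × ℝ => b (γ q.1) (β q.2)) (D1 z) Ω z :=
          fun z hz => ((hmsm.differentiableOn (by norm_num)) z hz).hasFDerivWithinAt
        have hD1dW : ∀ z ∈ Ω, HasFDerivWithinAt D1 (D2 z) Ω z :=
          fun z hz => ((hD1sm.differentiableOn (by norm_num)) z hz).hasFDerivWithinAt
        have hD2dW : ∀ z ∈ Ω, HasFDerivWithinAt D2 (D3 z) Ω z :=
          fun z hz => ((hD2sm.differentiableOn one_ne_zero) z hz).hasFDerivWithinAt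
        set et : ℝ × ℝ := (1, 0) with hetdef
        set es : ℝ × ℝ := (0, 1) with hesdef
        have hι : ∀ (s' t : ℝ), HasDerivAt (fun t' => ((t', s') : ℝ × ℝ)) et t := fun s' t =>
          (hasDerivAt_id t).prodMk (hasDerivAt_const t s')
        have hι₂ : ∀ (t s : ℝ), HasDerivAt (fun s' => ((t, s') : ℝ × ℝ)) es s := fun t s =>
          (hasDerivAt_const s t).prodMk (hasDerivAt_id s)
        have hmapι : ∀ s' ∈ Icc (0:ℝ) 1, Set.MapsTo (fun t' => ((t', s') : ℝ × ℝ)) (Ioo (0:ℝ) 1) Ω :=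
          fun s' hs' t' ht' => ⟨ht', hs'⟩
        have hmapι₂ : ∀ t ∈ Ioo (0:ℝ) 1, Set.MapsTo (fun s' => ((t, s') : ℝ × ℝ)) (Icc (0:ℝ) 1) Ω :=
          fun t ht s' hs' => ⟨ht, hs'⟩
        -- canonical first `t`-derivative agrees with the explicit formula
        have hD1et : ∀ t ∈ Ioo (0:ℝ) 1, ∀ s ∈ Icc (0:ℝ) 1,
            D1 (t, s) et = ⟪bX b (γ t) (β s), dγ t⟫ := by
          intro t ht s hs
          have h1 : HasDerivWithinAt (fun t' => b (γ t') (β s)) (D1 (t, s) et) (Ioo (0:ℝ) 1) t := by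
            have h := (hmdW (t, s) ⟨ht, hs⟩).comp_hasDerivWithinAt t ((hι s t).hasDerivWithinAt) (hmapι s hs)
            exact h
          have h1' : HasDerivAt (fun t' => b (γ t') (β s)) (D1 (t, s) et) t :=
            h1.hasDerivAt (Ioo_mem_nhds ht.1 ht.2)
          have h2 : HasDerivAt (fun t' => b (γ t') (β s)) ⟪bX b (γ t) (β s), dγ t⟫ t :=
            hasDerivAt_b_curve hXopen hb (hdγ t (Ioo_subset_Icc_self ht))
              (hγX t (Ioo_subset_Icc_self ht)) (hβY s hs)
          exact h1'.unique h2
        -- canonical second `t`-derivative agrees with `Nc`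
        set Nc : ℝ → ℝ := fun s => ⟪bX b x (β s), w⟫ + ⟪Hxx b x (β s) ξ, ξ⟫ with hNcdef
        have hform2 : ∀ s ∈ Icc (0:ℝ) 1, Nc s = (D2 (t₀, s) et) et := by
          intro s hs
          have hA : HasDerivWithinAt (fun t' => D1 (t', s)) (D2 (t₀, s) et) (Ioo (0:ℝ) 1) t₀ :=
            (hD1dW (t₀, s) ⟨ht₀, hs⟩).comp_hasDerivWithinAt t₀ ((hι s t₀).hasDerivWithinAt)
              (hmapι s hs)
          have hA' : HasDerivAt (fun t' => D1 (t', s)) (D2 (t₀, s) et) t₀ :=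
            hA.hasDerivAt (Ioo_mem_nhds ht₀.1 ht₀.2)
          have hA2 : HasDerivAt (fun t' => D1 (t', s) et) ((D2 (t₀, s) et) et) t₀ := by
            have h := hA'.clm_apply (hasDerivAt_const t₀ et)
            simp only [ContinuousLinearMap.map_zero, add_zero] at h
            exact h
          have hev : (fun t' => ⟪bX b (γ t') (β s), dγ t'⟫) =ᶠ[nhds t₀]
              (fun t' => D1 (t', s) et) := by
            filter_upwards [Ioo_mem_nhds ht₀.1 ht₀.2] with t' ht'
            exact (hD1et t' ht' s hs).symm
          have hA3 : HasDerivAt (fun t' => ⟪bX b (γ t') (β s), dγ t'⟫) ((D2 (t₀, s) et) et) t₀ :=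
            hA2.congr_of_eventuallyEq hev
          have hB := hasDerivAt_inner_bX_curve hXopen hb (hdγ t₀ ht₀I) hxX hw (hβY s hs)
          exact hB.unique hA3
        -- `s`-derivative of `Nc` at `0` within `[0,1]`
        have hNds : HasDerivWithinAt Nc (((D3 (t₀, 0) es) et) et) (Icc (0:ℝ) 1) 0 := by
          have h1 : HasDerivWithinAt (fun s' => D2 (t₀, s')) (D3 (t₀, 0) es) (Icc (0:ℝ) 1) 0 := by
            have h := @HasFDerivWithinAt.comp_hasDerivWithinAt ℝ _ (ℝ × ℝ) _ _ (ℝ × ℝ →L[ℝ] ℝ × ℝ →L[ℝ] ℝ) _ _ _ _ 0 _ _ _ _ (hD2dW (t₀, 0) hzstar) ((hι₂ t₀ 0).hasDerivWithinAt)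
              (hmapι₂ t₀ ht₀)
            exact h
          have h2 := h1.clm_apply (hasDerivWithinAt_const 0 _ et)
          simp only [ContinuousLinearMap.map_zero, add_zero] at h2
          have h3 := h2.clm_apply (hasDerivWithinAt_const 0 _ et)
          simp only [ContinuousLinearMap.map_zero, add_zero] at h3
          have h4 : HasDerivWithinAt (fun s' => D2 (t₀, s') et et) (((D3 (t₀, 0) es) et) et)
              (Icc (0:ℝ) 1) 0 := h3
          exact h4.congr (fun s hs => hform2 s hs) (hform2 0 (Set.left_mem_Icc.2 zero_le_one))
        -- Symmetry juggling: D3 es et et = D3 et et es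
        have hswap_outer : D3 (t₀, 0) es et = D3 (t₀, 0) et es := hSym2 es et
        have hswap_inner : ((D3 (t₀, 0) et) es) et = ((D3 (t₀, 0) et) et) es := by
          have hA'' : HasFDerivWithinAt (fun z => ((D2 z) es) et)
              ((ContinuousLinearMap.apply ℝ ℝ et).comp
                (((ContinuousLinearMap.apply ℝ ((ℝ × ℝ) →L[ℝ] ℝ) es)).comp (D3 (t₀, 0)))) Ω (t₀, 0) := by
            have h1 := hD2dW (t₀, 0) hzstar
            have h2 := ((ContinuousLinearMap.apply ℝ ((ℝ × ℝ) →L[ℝ] ℝ) es).hasFDerivAt).comp_hasFDerivWithinAt (F := ℝ × ℝ →L[ℝ] ℝ × ℝ →L[ℝ] ℝ) ((t₀, 0) : ℝ × ℝ) h1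
            exact ((ContinuousLinearMap.apply ℝ ℝ et).hasFDerivAt).comp_hasFDerivWithinAt (t₀, 0) h2
          have hBB : HasFDerivWithinAt (fun z => ((D2 z) et) es)
              ((ContinuousLinearMap.apply ℝ ℝ es).comp
                (((ContinuousLinearMap.apply ℝ ((ℝ × ℝ) →L[ℝ] ℝ) et)).comp (D3 (t₀, 0)))) Ω (t₀, 0) := by
            have h1 := hD2dW (t₀, 0) hzstar
            have h2 := ((ContinuousLinearMap.apply ℝ ((ℝ × ℝ) →L[ℝ] ℝ) et).hasFDerivAt).comp_hasFDerivWithinAt (F := ℝ × ℝ →L[ℝ] ℝ × ℝ →L[ℝ] ℝ) ((t₀, 0) : ℝ × ℝ) h1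
            exact ((ContinuousLinearMap.apply ℝ ℝ es).hasFDerivAt).comp_hasFDerivWithinAt (t₀, 0) h2
          have hA3 : HasFDerivWithinAt (fun z => ((D2 z) et) es)
              ((ContinuousLinearMap.apply ℝ ℝ et).comp
                (((ContinuousLinearMap.apply ℝ ((ℝ × ℝ) →L[ℝ] ℝ) es)).comp (D3 (t₀, 0)))) Ω (t₀, 0) := by
            refine hA''.congr (fun z hz => ?_) ?_
            · exact (hSym1 z hz et es)
            · exact (hSym1 (t₀, 0) hzstar et es)
          have heq := (hΩU (t₀, 0) hzstar).eq hBB hA3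
          have happ := ContinuousLinearMap.ext_iff.1 heq.symm et
          simp only [ContinuousLinearMap.coe_comp', Function.comp_apply,
            ContinuousLinearMap.apply_apply] at happ
          exact happ
        -- The affine function φ and vanishing of the third derivative
        have hbadzero : ∀ t ∈ Ioo (0:ℝ) 1,
            ¬ DifferentiableAt ℝ (fun y' => b (γ t) y') y₀ → ζ t = 0 := by
          intro t ht hbad
          have h1 : Φ (γ t) = 0 := by
            rw [hΦ (γ t)]
            show gradient (fun y' => b (γ t) y') y₀ = 0
            have hf0 : fderiv ℝ (fun y' => b (γ t) y') y₀ = 0 :=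
              fderiv_zero_of_not_differentiableAt hbad
            rw [gradient_eq_fromDualR, hf0, map_zero]
          rw [← hΦγ t (Ioo_subset_Icc_self ht), h1]
        have hφgood : ∀ t ∈ Ioo (0:ℝ) 1, DifferentiableAt ℝ (fun y' => b (γ t) y') y₀ →
            (D1 (t, 0)) es = ⟪ζ t, η⟫ := by
          intro t ht hdiffb
          have h1 : HasDerivWithinAt (fun s' => b (γ t) (β s')) ((D1 (t, 0)) es)
              (Icc (0:ℝ) 1) 0 :=
            (hmdW (t, 0) ⟨ht, Set.left_mem_Icc.2 zero_le_one⟩).comp_hasDerivWithinAt 0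
              ((hι₂ t 0).hasDerivWithinAt) (hmapι₂ t ht)
          have h2 : HasDerivWithinAt (fun s' => b (γ t) (β s'))
              (fderiv ℝ (fun y' => b (γ t) y') y₀ η) (Icc (0:ℝ) 1) 0 :=
            (hdiffb.hasFDerivAt).comp_hasDerivWithinAt_of_eq 0 hβd hβ0.symm
          have huniq := ((uniqueDiffOn_Icc zero_lt_one) 0
            (Set.left_mem_Icc.2 zero_le_one)).eq_deriv _ h1 h2
          rw [huniq]
          have h3 : ⟪bYd b (γ t) y₀, η⟫ = fderiv ℝ (fun y' => b (γ t) y') y₀ η :=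
            toDual_symm_apply
          rw [← h3, ← hΦ (γ t), hΦγ t (Ioo_subset_Icc_self ht)]
        have hφaffine : ∀ t ∈ Ioo (0:ℝ) 1, (D1 (t, 0)) es = ⟪ζ t, η⟫ := by
          intro t ht
          by_cases hgood : DifferentiableAt ℝ (fun y' => b (γ t) y') y₀
          · exact hφgood t ht hgood
          · -- t is the unique bad point; use continuity
            have hζt : ζ t = 0 := hbadzero t ht hgood
            have hother : ∀ t' ∈ Ioo (0:ℝ) 1, t' ≠ t → (D1 (t', 0)) es = ⟪ζ t', η⟫ := by
              intro t' ht' htne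
              by_cases hgood' : DifferentiableAt ℝ (fun y' => b (γ t') y') y₀
              · exact hφgood t' ht' hgood'
              · exfalso
                have hζt' : ζ t' = 0 := hbadzero t' ht' hgood'
                apply htne
                have hvv : t' • v = t • v := by
                  have h0 : ζ t' = ζ t := hζt'.trans hζt.symm
                  have h0' : z₀ + t' • v = z₀ + t • v := h0
                  exact add_left_cancel h0'
                have hsub : (t' - t) • v = 0 := by rw [sub_smul, hvv, sub_self]
                rcases smul_eq_zero.1 hsub with h | h
                · linarith [sub_eq_zero.1 (by linarith [h] : t' - t = 0)]
                · exact absurd h hvne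
            have hcontφ : ContinuousWithinAt (fun t' => (D1 (t', 0)) es) (Ioo (0:ℝ) 1) t := by
              have hc2 : ContinuousOn (fun t' : ℝ => D1 (t', 0)) (Ioo (0:ℝ) 1) :=
                hD1sm.continuousOn.comp
                  ((continuous_id.prodMk continuous_const).continuousOn)
                  (hmapι 0 (Set.left_mem_Icc.2 zero_le_one))
              exact ((ContinuousLinearMap.apply ℝ ℝ es).continuous.comp_continuousOn hc2) t ht
            have hneB : (nhdsWithin t (Ioo (0:ℝ) 1 \ {t})).NeBot := by
              apply mem_closure_iff_nhdsWithin_neBot.1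
              have hsub : Ioo t 1 ⊆ Ioo (0:ℝ) 1 \ {t} := fun z hz =>
                ⟨⟨lt_trans ht.1 hz.1, hz.2⟩, ne_of_gt hz.1⟩
              refine closure_mono hsub ?_
              rw [closure_Ioo (ne_of_lt ht.2)]
              exact ⟨le_refl t, le_of_lt ht.2⟩
            haveI := hneB
            have l1 : Filter.Tendsto (fun t' => (D1 (t', 0)) es)
                (nhdsWithin t (Ioo (0:ℝ) 1 \ {t})) (nhds ((D1 (t, 0)) es)) :=
              hcontφ.mono_left (nhdsWithin_mono _ Set.diff_subset)
            have l2 : Filter.Tendsto (fun t' => ⟪ζ t', η⟫)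
                (nhdsWithin t (Ioo (0:ℝ) 1 \ {t})) (nhds ⟪ζ t, η⟫) :=
              ((hζsm.continuous.inner continuous_const).tendsto t).mono_left nhdsWithin_le_nhds
            have l1' : Filter.Tendsto (fun t' => ⟪ζ t', η⟫)
                (nhdsWithin t (Ioo (0:ℝ) 1 \ {t})) (nhds ((D1 (t, 0)) es)) := by
              refine l1.congr' ?_
              refine Filter.eventually_of_mem self_mem_nhdsWithin (fun z hz => ?_)
              exact (hother z hz.1 hz.2)
            exact tendsto_nhds_unique l1' l2
        have hφ1const : ∀ t ∈ Ioo (0:ℝ) 1, (D2 (t, 0) et) es = ⟪v, η⟫ := by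
          intro t ht
          have hA : HasDerivWithinAt (fun t' => D1 (t', 0)) (D2 (t, 0) et) (Ioo (0:ℝ) 1) t :=
            (hD1dW (t, 0) ⟨ht, Set.left_mem_Icc.2 zero_le_one⟩).comp_hasDerivWithinAt t
              ((hι 0 t).hasDerivWithinAt) (hmapι 0 (Set.left_mem_Icc.2 zero_le_one))
          have h1 : HasDerivAt (fun t' => (D1 (t', 0)) es) ((D2 (t, 0) et) es) t := by
            have h := (hA.hasDerivAt (Ioo_mem_nhds ht.1 ht.2)).clm_apply (hasDerivAt_const t es)
            simp only [ContinuousLinearMap.map_zero, add_zero] at h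
            exact h
          have hev : (fun t' => ⟪ζ t', η⟫) =ᶠ[nhds t] (fun t' => (D1 (t', 0)) es) := by
            filter_upwards [Ioo_mem_nhds ht.1 ht.2] with t' ht'
            exact (hφaffine t' ht').symm
          have h2 : HasDerivAt (fun t' => ⟪ζ t', η⟫) ((D2 (t, 0) et) es) t :=
            h1.congr_of_eventuallyEq hev
          have h3 : HasDerivAt (fun t' => ⟪ζ t', η⟫) ⟪v, η⟫ t := by
            have h := HasDerivAt.inner ℝ (hζd t) (hasDerivAt_const t η)
            simpa using h
          exact h2.unique h3
        have hW0 : ((D3 (t₀, 0) et) et) es = 0 := by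
          have hA : HasDerivWithinAt (fun t' => D2 (t', 0)) (D3 (t₀, 0) et) (Ioo (0:ℝ) 1) t₀ := by
            have h := @HasFDerivWithinAt.comp_hasDerivWithinAt ℝ _ (ℝ × ℝ) _ _ (ℝ × ℝ →L[ℝ] ℝ × ℝ →L[ℝ] ℝ) _ _ _ _ t₀ _ _ _ _ (hD2dW (t₀, 0) hzstar) ((hι 0 t₀).hasDerivWithinAt)
              (hmapι 0 (Set.left_mem_Icc.2 zero_le_one))
            exact h
          have h1 : HasDerivAt (fun t' => (D2 (t', 0) et) es) (((D3 (t₀, 0) et) et) es) t₀ := by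
            have hA' := HasDerivWithinAt.hasDerivAt (F := ℝ × ℝ →L[ℝ] ℝ × ℝ →L[ℝ] ℝ) hA (Ioo_mem_nhds ht₀.1 ht₀.2)
            have ha := hA'.clm_apply
              (hasDerivAt_const t₀ et)
            simp only [ContinuousLinearMap.map_zero, add_zero] at ha
            have h := ha.clm_apply (hasDerivAt_const t₀ es)
            simp only [ContinuousLinearMap.map_zero, add_zero] at h
            exact h
          have hev : (fun _ : ℝ => (⟪v, η⟫ : ℝ)) =ᶠ[nhds t₀] (fun t' => (D2 (t', 0) et) es) := by
            filter_upwards [Ioo_mem_nhds ht₀.1 ht₀.2] with t' ht'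
            exact (hφ1const t' ht').symm
          have h2 : HasDerivAt (fun _ : ℝ => (⟪v, η⟫ : ℝ)) (((D3 (t₀, 0) et) et) es) t₀ :=
            h1.congr_of_eventuallyEq hev
          exact h2.unique (hasDerivAt_const t₀ _)
        have hV0 : ((D3 (t₀, 0) es) et) et = 0 := by
          have h1 : (D3 (t₀, 0) es) et = (D3 (t₀, 0) et) es := by rw [hswap_outer]
          calc ((D3 (t₀, 0) es) et) et = ((D3 (t₀, 0) et) es) et := by rw [h1]
            _ = ((D3 (t₀, 0) et) et) es := hswap_inner
            _ = 0 := hW0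
        have hNds0 : HasDerivWithinAt Nc 0 (Icc (0:ℝ) 1) 0 := by
          have h := hNds
          rw [hV0] at h
          exact h
        -- convexity of Nc on [0,1] via B3, and conclusion Nc 0 ≤ Nc 1
        have hM : ConvexOn ℝ (Icc (0:ℝ) 1)
            (fun s => ⟪ξ, Hxx b x (Ymap x (pseg s)) ξ⟫) := by
          refine ⟨convex_Icc _ _, fun s hs s' hs' a' b' ha' hb' hab' => ?_⟩
          have hcomb : pseg (a' • s + b' • s') = a' • pseg s + b' • pseg s' := by
            simp only [hpsegdef, smul_eq_mul]
            match_scalars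
            · linear_combination hab'.symm
            · ring
          simp only []
          rw [hcomb]
          exact hB3x.2 (hpsegS s hs) (hpsegS s' hs') ha' hb' hab'
        have hNeq : ∀ s ∈ Icc (0:ℝ) 1,
            Nc s = (⟪p₀, w⟫ + s * ⟪p₁ - p₀, w⟫) + ⟪ξ, Hxx b x (Ymap x (pseg s)) ξ⟫ := by
          intro s hs
          have h1 : ⟪bX b x (β s), w⟫ = ⟪p₀, w⟫ + s * ⟪p₁ - p₀, w⟫ := by
            rw [hbXβ s hs]
            show ⟪p₀ + s • (p₁ - p₀), w⟫ = _
            rw [inner_add_left, real_inner_smul_left]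
          have h2 : ⟪Hxx b x (β s) ξ, ξ⟫ = ⟪ξ, Hxx b x (Ymap x (pseg s)) ξ⟫ := by
            rw [real_inner_comm]
          show ⟪bX b x (β s), w⟫ + ⟪Hxx b x (β s) ξ, ξ⟫ = _
          rw [h1, h2]
        have hkey : Nc 0 ≤ Nc 1 := by
          have hd : HasDerivWithinAt
              (fun s => (⟪p₀, w⟫ + s * ⟪p₁ - p₀, w⟫) + ⟪ξ, Hxx b x (Ymap x (pseg s)) ξ⟫) 0
              (Icc (0:ℝ) 1) 0 :=
            hNds0.congr (fun s hs => (hNeq s hs).symm)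
              ((hNeq 0 (Set.left_mem_Icc.2 zero_le_one)).symm)
          have hle := le_of_convexOn_hasDerivWithinAt_zero
            ((convexOn_affine_Icc ⟪p₀, w⟫ ⟪p₁ - p₀, w⟫).add hM) hd
          rw [hNeq 0 (Set.left_mem_Icc.2 zero_le_one), hNeq 1 (Set.right_mem_Icc.2 zero_le_one)]
          exact hle
        -- bound ‖v‖ via the derivative of Φ
        have hvC : ‖v‖ ≤ C * ‖ξ‖ := by
          have hΦatx : HasFDerivAt Φ (fderiv ℝ Φ x) x :=
            ((hΦsm'.contDiffAt (Filter.mem_of_superset (hXopen.mem_nhds hxX)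
              subset_closure)).differentiableAt (by simp)).hasFDerivAt
          have hcomp : HasDerivAt (fun t => Φ (γ t)) (fderiv ℝ Φ x ξ) t₀ :=
            hΦatx.comp_hasDerivAt t₀ (hdγ t₀ ht₀I)
          have hev : ζ =ᶠ[nhds t₀] (fun t => Φ (γ t)) := by
            filter_upwards [Ioo_mem_nhds ht₀.1 ht₀.2] with t ht
            exact (hΦγ t (Ioo_subset_Icc_self ht)).symm
          have hcong : HasDerivAt ζ (fderiv ℝ Φ x ξ) t₀ := hcomp.congr_of_eventuallyEq hev
          have hveq : v = fderiv ℝ Φ x ξ := (hζd t₀).unique hcong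
          rw [hveq]
          calc ‖fderiv ℝ Φ x ξ‖ ≤ ‖fderiv ℝ Φ x‖ * ‖ξ‖ := (fderiv ℝ Φ x).le_opNorm ξ
            _ ≤ C * ‖ξ‖ := mul_le_mul_of_nonneg_right (hC x hxX) (norm_nonneg _)
        -- assemble everything
        have hNc0 : Nc 0 = ⟪bX b x y₀, w⟫ + ⟪Hxx b x y₀ ξ, ξ⟫ := by
          show ⟪bX b x (β 0), w⟫ + ⟪Hxx b x (β 0) ξ, ξ⟫ = _
          rw [hβ0]
        have hNc1 : Nc 1 = ⟪gradient u x, w⟫ + ⟪Hxx b x (Ymap x (gradient u x)) ξ, ξ⟫ := by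
          show ⟪bX b x (β 1), w⟫ + ⟪Hxx b x (β 1) ξ, ξ⟫ = _
          rw [hbXβ 1 (Set.right_mem_Icc.2 zero_le_one), hpseg1, hβ1, hp₁def]
        have hh := hhess x hxX ξ
        have hcm1 : ⟪Hxx b x (Ymap x (gradient u x)) ξ, ξ⟫
            = ⟪ξ, Hxx b x (Ymap x (gradient u x)) ξ⟫ := real_inner_comm _ _
        have hcm2 : ⟪fderiv ℝ (gradient u) x ξ, ξ⟫ = ⟪ξ, fderiv ℝ (gradient u) x ξ⟫ :=
          real_inner_comm _ _
        have hvv : ⟪v, v⟫ = ‖v‖^2 := real_inner_self_eq_norm_sq v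
        have hdv : δ * ‖v‖^2 ≤ ε * ‖ξ‖^2 := by
          rcases hδc with rfl | hδC
          · have h0 : (0:ℝ) ≤ ε * ‖ξ‖^2 := mul_nonneg hε (sq_nonneg _)
            simpa using h0
          · have h1 : ‖v‖^2 ≤ (C * ‖ξ‖)^2 := pow_le_pow_left₀ (norm_nonneg v) hvC 2
            calc δ * ‖v‖^2 ≤ δ * ((C * ‖ξ‖)^2) := mul_le_mul_of_nonneg_left h1 hδ
              _ = (δ * C^2) * ‖ξ‖^2 := by ring
              _ ≤ ε * ‖ξ‖^2 := mul_le_mul_of_nonneg_right hδC (sq_nonneg _)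
        have hkey' := hkey
        rw [hNc0, hNc1] at hkey'
        have hfin : δ/2 * (⟪v, v⟫ + ⟪v, v⟫) = δ * ‖v‖^2 := by rw [hvv]; ring
        linarith only [hkey', hh, hcm1, hcm2, hdv, hfin]

      -- assemble convexity of g on [0,1]
      have hderiv_eq : Set.EqOn (deriv g) G1 (Ioo (0:ℝ) 1) := fun t ht =>
        (hg1 t (Ioo_subset_Icc_self ht)).deriv
      have hG1diff : DifferentiableOn ℝ G1 (Ioo (0:ℝ) 1) := by
        intro t ht
        obtain ⟨q, hq, -⟩ := hg2 t ht
        exact hq.differentiableAt.differentiableWithinAt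
      have hgconv : ConvexOn ℝ (Icc (0:ℝ) 1) g := by
        apply convexOn_of_deriv2_nonneg (convex_Icc 0 1)
        · intro t ht
          exact (hg1 t ht).continuousAt.continuousWithinAt
        · intro t ht
          rw [interior_Icc] at ht
          exact (hg1 t (Ioo_subset_Icc_self ht)).differentiableAt.differentiableWithinAt
        · rw [interior_Icc]
          exact (hG1diff.congr hderiv_eq)
        · intro t ht
          rw [interior_Icc] at ht
          obtain ⟨q, hq, hq0⟩ := hg2 t ht
          have hev : deriv g =ᶠ[nhds t] G1 := by
            filter_upwards [Ioo_mem_nhds ht.1 ht.2] with s hs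
            exact hderiv_eq hs
          have : deriv (deriv g) t = deriv G1 t := hev.deriv_eq
          have h2 : deriv (deriv g) t = q := by rw [this, hq.deriv]
          show 0 ≤ deriv^[2] g t
          have h3 : deriv^[2] g t = deriv (deriv g) t := by
            simp [Function.iterate_succ, Function.iterate_zero]
          rw [h3, h2]; exact hq0
      -- conclude the two-point inequality
      have hb2I : b₂ ∈ Icc (0:ℝ) 1 := ⟨hb₂, by linarith⟩
      have hcomb := hgconv.2 (Set.left_mem_Icc.2 zero_le_one) (Set.right_mem_Icc.2 zero_le_one)
        ha₂ hb₂ hab₂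
      have hpt : a₂ • (0:ℝ) + b₂ • (1:ℝ) = b₂ := by simp
      rw [hpt] at hcomb
      have hζb : ζ b₂ = a₂ • z₀ + b₂ • z₁ := by
        have ha₂' : a₂ = 1 - b₂ := by linarith
        rw [hζdef]; simp only [hv, ha₂']; module
      have hg0 : g 0 = u (Ψ z₀) - b (Ψ z₀) y₀ - δ/2 * ‖z₀‖^2 := by
        have h0 : ζ 0 = z₀ := by simp [hζdef]
        simp only [hgdef, hγdef, h0]
      have hg1' : g 1 = u (Ψ z₁) - b (Ψ z₁) y₀ - δ/2 * ‖z₁‖^2 := by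
        have h1 : ζ 1 = z₁ := by simp [hζdef, hv]
        simp only [hgdef, hγdef, h1]
      have hgb : g b₂ = u (Ψ (a₂ • z₀ + b₂ • z₁)) - b (Ψ (a₂ • z₀ + b₂ • z₁)) y₀
          - δ/2 * ‖a₂ • z₀ + b₂ • z₁‖^2 := by
        simp only [hgdef, hγdef, hζb]
      rw [hg0, hg1', hgb] at hcomb
      simpa using hcomb
  constructor
  · have h0 := core 0 le_rfl (Or.inl rfl)
    have heq : (fun z => u (Ψ z) - b (Ψ z) y₀)
        = fun z => u (Ψ z) - b (Ψ z) y₀ - (0:ℝ)/2 * ‖z‖^2 := by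
      funext z; ring
    rw [heq]; exact h0
  · intro hε
    refine ⟨ε/(C^2+1), by positivity, ?_⟩
    refine core _ (by positivity) (Or.inr ?_)
    rw [div_mul_eq_mul_div, div_le_iff₀ (by positivity)]
    nlinarith [sq_nonneg C]


end
end

section
/- Under the hypotheses of the coordinate-change lemma — X, Y ⊂ ℝⁿ bounded open, b : X̄ × Ȳ → ℝ of class C³ satisfying B1 and B3, y₀ ∈ Ȳ, Φ : x ↦ b_y(x,y₀) a diffeomorphism from X onto a convex open set X̃, and u : X → ℝ a C² function with ∇u(x) ∈ b_x(x,Ȳ) and D²u(x) ≥ D²_{xx} b(x,Y(x,∇u(x))) for all x — fix x₀ ∈ X with b-support y₀, i.e. u(x) ≥ u(x₀) + b(x,y₀) − b(x₀,y₀) for all x ∈ X. Then for every h ≥ 0 the set Φ( { x ∈ X : u(x) − u(x₀) − b(x,y₀) + b(x₀,y₀) < h } ) is a convex subset of ℝⁿ. -/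
open MeasureTheory RealInnerProductSpace

noncomputable section

variable {n : ℕ}

section Helpers

open Set Filter Topology

variable {F : Type*} [NormedAddCommGroup F] [InnerProductSpace ℝ F] [CompleteSpace F]

/-- chain rule: scalar function along a curve, gradient form -/
lemma hasDerivAt_comp_gradient {v : F → ℝ} {c : ℝ → F} {t : ℝ} {ct' : F}
    (hv : DifferentiableAt ℝ v (c t)) (hc : HasDerivAt c ct' t) :
    HasDerivAt (fun s => v (c s)) ⟪gradient v (c t), ct'⟫ t := by
  have h1 : HasFDerivAt v ((InnerProductSpace.toDual ℝ F) (gradient v (c t))) (c t) :=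
    hasGradientAt_iff_hasFDerivAt.1 hv.hasGradientAt
  exact h1.comp_hasDerivAt t hc

lemma contDiffAt_gradient {v : F → ℝ} {x : F} {m n : WithTop ℕ∞} (hv : ContDiffAt ℝ n v x)
    (hmn : m + 1 ≤ n) : ContDiffAt ℝ m (gradient v) x := by
  have h1 : ContDiffAt ℝ m (fderiv ℝ v) x := hv.fderiv_right hmn
  have h2 : ContDiff ℝ m fun p : F →L[ℝ] ℝ => (InnerProductSpace.toDual ℝ F).symm p :=
    ContDiff.of_le (InnerProductSpace.toDual ℝ F).symm.contDiff le_top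
  show ContDiffAt ℝ m (fun y => (InnerProductSpace.toDual ℝ F).symm (fderiv ℝ v y)) x
  exact h2.comp_contDiffAt (x := x) h1

/-- second derivative of v∘c expressed with gradient and hessian -/
lemma hasDerivAt_inner_gradient {v : F → ℝ} {c : ℝ → F} {t₀ : ℝ}
    (hv : ContDiffAt ℝ 2 v (c t₀)) (hc : ContDiffAt ℝ ((⊤ : ℕ∞) : WithTop ℕ∞) c t₀) :
    HasDerivAt (fun t => ⟪gradient v (c t), deriv c t⟫)
      (⟪gradient v (c t₀), deriv (deriv c) t₀⟫ +
        ⟪(fderiv ℝ (gradient v) (c t₀)) (deriv c t₀), deriv c t₀⟫) t₀ := by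
  have hcd : HasDerivAt c (deriv c t₀) t₀ :=
    (hc.differentiableAt (by simp)).hasDerivAt
  have hg1 : ContDiffAt ℝ 1 (gradient v) (c t₀) := contDiffAt_gradient hv le_rfl
  have hgf : HasFDerivAt (gradient v) (fderiv ℝ (gradient v) (c t₀)) (c t₀) :=
    (hg1.differentiableAt one_ne_zero).hasFDerivAt
  have h1 : HasDerivAt (fun t => gradient v (c t))
      ((fderiv ℝ (gradient v) (c t₀)) (deriv c t₀)) t₀ := hgf.comp_hasDerivAt t₀ hcd
  have hc1 : ContDiffAt ℝ 1 (deriv c) t₀ := by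
    have h2 : ContDiffAt ℝ 1 (fderiv ℝ c) t₀ := hc.fderiv_right (WithTop.coe_le_coe.2 le_top)
    have h3 : ContDiffAt ℝ 1 (fun t => (fderiv ℝ c t) 1) t₀ := h2.clm_apply contDiffAt_const
    exact h3.congr_of_eventuallyEq (Eventually.of_forall fun t => (fderiv_apply_one_eq_deriv).symm)
  have h2 : HasDerivAt (deriv c) (deriv (deriv c) t₀) t₀ :=
    (hc1.differentiableAt one_ne_zero).hasDerivAt
  simpa using h1.inner ℝ h2

variable {W : Type*} [NormedAddCommGroup W] [NormedSpace ℝ W]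

/-- genuine derivative of the first-variable slice of a function on a product rectangle -/
lemma slice_fst_hasDerivAt {H : ℝ × ℝ → W} {I J : Set ℝ} {t σ : ℝ}
    (hH : DifferentiableWithinAt ℝ H (I ×ˢ J) (t, σ))
    (hI : I ∈ 𝓝 t) (hσ : σ ∈ J) :
    HasDerivAt (fun t' => H (t', σ)) (fderivWithin ℝ H (I ×ˢ J) (t, σ) (1, 0)) t := by
  have h1 : HasFDerivWithinAt H (fderivWithin ℝ H (I ×ˢ J) (t, σ)) (I ×ˢ J) (t, σ) :=
    hH.hasFDerivWithinAt
  have hι : HasDerivWithinAt (fun t' : ℝ => ((t', σ) : ℝ × ℝ)) ((1 : ℝ), (0 : ℝ)) I t :=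
    (HasDerivAt.prodMk (hasDerivAt_id t) (hasDerivAt_const t σ)).hasDerivWithinAt
  have h2 : HasDerivWithinAt (fun t' => H (t', σ))
      (fderivWithin ℝ H (I ×ˢ J) (t, σ) (1, 0)) I t :=
    h1.comp_hasDerivWithinAt t hι (fun t' ht' => Set.mk_mem_prod ht' hσ)
  exact h2.hasDerivAt hI

/-- within-derivative of the second-variable slice -/
lemma slice_snd_hasDerivWithinAt {H : ℝ × ℝ → W} {I J : Set ℝ} {t σ : ℝ}
    (hH : DifferentiableWithinAt ℝ H (I ×ˢ J) (t, σ))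
    (ht : t ∈ I) :
    HasDerivWithinAt (fun σ' => H (t, σ')) (fderivWithin ℝ H (I ×ˢ J) (t, σ) (0, 1)) J σ := by
  have h1 : HasFDerivWithinAt H (fderivWithin ℝ H (I ×ˢ J) (t, σ)) (I ×ˢ J) (t, σ) :=
    hH.hasFDerivWithinAt
  have hι : HasDerivWithinAt (fun σ' : ℝ => ((t, σ') : ℝ × ℝ)) ((0 : ℝ), (1 : ℝ)) J σ :=
    (HasDerivAt.prodMk (hasDerivAt_const σ t) (hasDerivAt_id σ)).hasDerivWithinAt
  exact h1.comp_hasDerivWithinAt σ hι (fun σ' hσ' => Set.mk_mem_prod ht hσ')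

/-- uniqueness of 1-D within derivatives at points of unique differentiability -/
lemma hasDerivWithinAt_unique {f : ℝ → W} {s : Set ℝ} {x : ℝ} {a b : W}
    (hu : UniqueDiffWithinAt ℝ s x)
    (ha : HasDerivWithinAt f a s x) (hb : HasDerivWithinAt f b s x) : a = b := by
  have h1 := hu.eq ha.hasFDerivWithinAt hb.hasFDerivWithinAt
  have h2 := congrArg (fun L : ℝ →L[ℝ] W => L 1) h1
  simpa using h2

omit [NormedSpace ℝ W] in
/-- two functions continuous at a point agreeing near the point off a subsingleton agree there -/
lemma eq_of_continuousAt_of_subsingleton_exception {f g : ℝ → W} {S : Set ℝ} (hS : S.Subsingleton)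
    {t : ℝ} (hf : ContinuousAt f t) (hg : ContinuousAt g t)
    (hfg : ∀ᶠ t' in 𝓝 t, t' ∉ S → f t' = g t') : f t = g t := by
  by_cases htS : ∃ s₀ ∈ S, s₀ ≠ t
  · obtain ⟨s₀, hs₀, hs₀t⟩ := htS
    have hSsub : S ⊆ {s₀} := fun z hz => by simp [hS hz hs₀]
    have hev : ∀ᶠ t' in 𝓝[≠] t, f t' = g t' := by
      have h1 : ∀ᶠ t' in 𝓝 t, t' ≠ s₀ :=
        (isOpen_ne.eventually_mem (by simpa [eq_comm] using hs₀t.symm))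
      filter_upwards [eventually_nhdsWithin_of_eventually_nhds (hfg.and h1)] with z hz
      exact hz.1 fun hzS => hz.2 (by simpa using hSsub hzS)
    exact tendsto_nhds_unique_of_eventuallyEq
      (hf.continuousWithinAt.tendsto) (hg.continuousWithinAt.tendsto) hev
  · push_neg at htS
    have hSsub : S ⊆ {t} := fun z hz => by simpa using htS z hz
    have hev : ∀ᶠ t' in 𝓝[≠] t, f t' = g t' := by
      filter_upwards [eventually_nhdsWithin_of_eventually_nhds hfg,
        self_mem_nhdsWithin] with z hz hz'
      exact hz fun hzS => hz' (by simpa using hSsub hzS)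
    exact tendsto_nhds_unique_of_eventuallyEq
      (hf.continuousWithinAt.tendsto) (hg.continuousWithinAt.tendsto) hev

end Helpers
section Core

open Set Filter Topology

lemma main_ineq {n : ℕ}
    (X Y : Set (EuclideanSpace ℝ (Fin n)))
    (hXopen : IsOpen X)
    (b : EuclideanSpace ℝ (Fin n) → EuclideanSpace ℝ (Fin n) → ℝ)
    (hb : ContDiffOn ℝ 3 (Function.uncurry b) (closure X ×ˢ closure Y))
    (hBX : ∀ x₀ ∈ closure X, IsDiffeoOnto (fun y => bX b x₀ y) (closure Y))
    (Ymap : EuclideanSpace ℝ (Fin n) → EuclideanSpace ℝ (Fin n) → EuclideanSpace ℝ (Fin n))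
    (hY : IsYmap b X Y Ymap) (hB3 : CondB3 b X Y Ymap)
    (y₀ : EuclideanSpace ℝ (Fin n)) (hy₀ : y₀ ∈ closure Y)
    (c : ℝ → EuclideanSpace ℝ (Fin n)) (U : Set ℝ) (hUopen : IsOpen U)
    (hccd : ∀ t ∈ U, ContDiffAt ℝ ((⊤ : ℕ∞) : WithTop ℕ∞) c t)
    (hcX : ∀ t ∈ U, c t ∈ X)
    (z₀ dz : EuclideanSpace ℝ (Fin n))
    (haff : ∀ t ∈ U, bYd b (c t) y₀ = z₀ + t • dz)
    (hbad : {t | t ∈ U ∧ ¬ DifferentiableAt ℝ (fun y => b (c t) y) y₀}.Subsingleton)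
    (t₀ : ℝ) (ht₀ : t₀ ∈ U)
    (p₁ : EuclideanSpace ℝ (Fin n))
    (hp₁ : p₁ ∈ (fun y => bX b (c t₀) y) '' closure Y) :
    ⟪deriv c t₀, Hxx b (c t₀) y₀ (deriv c t₀)⟫ + ⟪bX b (c t₀) y₀, deriv (deriv c) t₀⟫ ≤
      ⟪deriv c t₀, Hxx b (c t₀) (Ymap (c t₀) p₁) (deriv c t₀)⟫ +
        ⟪p₁, deriv (deriv c) t₀⟫ := by
  have hxX : c t₀ ∈ X := hcX t₀ ht₀
  have hxcl : c t₀ ∈ closure X := subset_closure hxX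
  obtain ⟨hbXsm, g, hgli, hgsm⟩ := hBX (c t₀) hxcl
  set x := c t₀ with hxdef
  set ξ := deriv c t₀ with hξdef
  set cdd := deriv (deriv c) t₀ with hcdddef
  set K := (fun y => bX b x y) '' closure Y with hKdef
  have hKconv : Convex ℝ K := (hB3 x hxcl ξ).1
  have hYx := hY x hxcl
  have hYg : ∀ p ∈ K, Ymap x p = g p := by
    intro p hp
    obtain ⟨hYcl, hbXY⟩ := hYx.2 p hp
    have h1 : g (bX b x (Ymap x p)) = Ymap x p := hgli hYcl
    rw [hbXY] at h1
    exact h1.symm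
  set p₀ := bX b x y₀ with hp₀def
  have hp₀K : p₀ ∈ K := ⟨y₀, hy₀, rfl⟩
  set pc := fun σ : ℝ => p₀ + σ • (p₁ - p₀) with hpcdef
  have hpicc : ∀ σ ∈ Icc (0:ℝ) 1, pc σ ∈ K := by
    intro σ hσ
    have h1 := hKconv hp₀K hp₁ (by linarith [hσ.2] : (0:ℝ) ≤ 1 - σ) hσ.1 (by ring)
    have h2 : (1 - σ) • p₀ + σ • p₁ = pc σ := by
      simp only [hpcdef]; module
    rwa [h2] at h1
  set yc := fun σ : ℝ => g (pc σ) with hycdef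
  have hycY : ∀ σ ∈ Icc (0:ℝ) 1, yc σ ∈ closure Y := by
    intro σ hσ
    have := (hYx.2 _ (hpicc σ hσ)).1
    rwa [hYg _ (hpicc σ hσ)] at this
  have hpc0 : pc 0 = p₀ := by simp [hpcdef]
  have hpc1 : pc 1 = p₁ := by simp [hpcdef]
  have hyc0 : yc 0 = y₀ := by
    show g (pc 0) = y₀
    rw [hpc0]
    exact hgli hy₀
  have hyc1 : yc 1 = Ymap x p₁ := by
    show g (pc 1) = Ymap x p₁
    rw [hpc1, hYg _ hp₁]
  have hycYm : ∀ σ ∈ Icc (0:ℝ) 1, yc σ = Ymap x (pc σ) := by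
    intro σ hσ; exact (hYg _ (hpicc σ hσ)).symm
  have hbXyc : ∀ σ ∈ Icc (0:ℝ) 1, bX b x (yc σ) = pc σ := by
    intro σ hσ
    have h1 := (hYx.2 _ (hpicc σ hσ)).2
    rw [← hycYm σ hσ] at h1
    exact h1
  have hpcsm : ContDiff ℝ (⊤ : WithTop ℕ∞) pc := by
    apply contDiff_const.add
    exact contDiff_id.smul contDiff_const
  have hycsm : ContDiffOn ℝ ((⊤ : ℕ∞) : WithTop ℕ∞) yc (Icc (0:ℝ) 1) :=
    hgsm.comp (hpcsm.of_le le_top).contDiffOn (fun σ hσ => hpicc σ hσ)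
  -- the rectangle
  obtain ⟨ε, hε, hball⟩ := Metric.isOpen_iff.1 hUopen t₀ ht₀
  set r := ε / 2 with hrdef
  have hr : 0 < r := by positivity
  set I := Icc (t₀ - r) (t₀ + r) with hIdef
  have hIU : I ⊆ U := by
    intro t ht
    apply hball
    rw [Metric.mem_ball, Real.dist_eq, abs_sub_lt_iff]
    constructor <;> [linarith [ht.2]; linarith [ht.1]]
  have hIt₀ : I ∈ 𝓝 t₀ := Icc_mem_nhds (by linarith) (by linarith)
  have ht₀I : t₀ ∈ I := ⟨by linarith, by linarith⟩
  have hintI : interior I = Ioo (t₀ - r) (t₀ + r) := interior_Icc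
  have ht₀int : t₀ ∈ interior I := by
    rw [hintI]; exact ⟨by linarith, by linarith⟩
  set J := Icc (0:ℝ) 1 with hJdef
  have h0J : (0:ℝ) ∈ J := ⟨le_refl _, zero_le_one⟩
  have h1J : (1:ℝ) ∈ J := ⟨zero_le_one, le_refl _⟩
  set D := I ×ˢ J with hDdef
  have hDuniq : UniqueDiffOn ℝ D :=
    (uniqueDiffOn_Icc (by linarith)).prod (uniqueDiffOn_Icc one_pos)
  have hDcl : closure (interior D) = D := by
    rw [hDdef, interior_prod_eq, hIdef, hJdef, interior_Icc, interior_Icc, closure_prod_eq,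
      closure_Ioo (by intro h; linarith [h] : t₀ - r ≠ t₀ + r),
      closure_Ioo (zero_ne_one)]
  set B := fun q : ℝ × ℝ => b (c q.1) (yc q.2) with hBdef
  have hmapin : Set.MapsTo (fun q : ℝ × ℝ => (c q.1, yc q.2)) D (closure X ×ˢ closure Y) := by
    intro q hq
    exact ⟨subset_closure (hcX _ (hIU hq.1)), hycY _ hq.2⟩
  have hBsm : ContDiffOn ℝ 3 B D := by
    have hmap1 : ContDiffOn ℝ 3 (fun q : ℝ × ℝ => c q.1) D := by
      intro q hq
      have h1 : ContDiffAt ℝ 3 (fun q : ℝ × ℝ => c q.1) q :=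
        ((hccd q.1 (hIU hq.1)).of_le (WithTop.coe_le_coe.2 le_top)).comp q contDiffAt_fst
      exact h1.contDiffWithinAt
    have hmap2 : ContDiffOn ℝ 3 (fun q : ℝ × ℝ => yc q.2) D :=
      (hycsm.of_le (WithTop.coe_le_coe.2 le_top)).comp contDiff_snd.contDiffOn (fun q hq => hq.2)
    exact hb.comp (hmap1.prodMk hmap2) hmapin
  -- within-derivative auxiliary functions
  set F₁ := fun q : ℝ × ℝ => fderivWithin ℝ B D q (1, 0) with hF₁def
  set F₂ := fun q : ℝ × ℝ => fderivWithin ℝ B D q (0, 1) with hF₂def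
  have hdB : ContDiffOn ℝ 2 (fderivWithin ℝ B D) D :=
    hBsm.fderivWithin hDuniq (by norm_num)
  have hF₁sm : ContDiffOn ℝ 2 F₁ D := hdB.clm_apply contDiffOn_const
  have hF₂sm : ContDiffOn ℝ 2 F₂ D := hdB.clm_apply contDiffOn_const
  have hdF₁ : ContDiffOn ℝ 1 (fderivWithin ℝ F₁ D) D :=
    hF₁sm.fderivWithin hDuniq (by norm_num)
  have hdF₂ : ContDiffOn ℝ 1 (fderivWithin ℝ F₂ D) D :=
    hF₂sm.fderivWithin hDuniq (by norm_num)
  set G := fun q : ℝ × ℝ => fderivWithin ℝ F₁ D q (1, 0) with hGdef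
  set J₂ := fun q : ℝ × ℝ => fderivWithin ℝ F₂ D q (1, 0) with hJ₂def
  have hGsm : ContDiffOn ℝ 1 G D := hdF₁.clm_apply contDiffOn_const
  have hJ₂sm : ContDiffOn ℝ 1 J₂ D := hdF₂.clm_apply contDiffOn_const
  -- genuine derivatives of c
  have hcderiv : ∀ t ∈ U, HasDerivAt c (deriv c t) t := fun t ht =>
    ((hccd t ht).differentiableAt (by simp)).hasDerivAt
  -- smoothness of x-slices of b
  have hslice : ∀ y ∈ closure Y, ∀ t ∈ U, ContDiffAt ℝ 3 (fun x' => b x' y) (c t) := by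
    intro y hy t ht
    have h1 : ContDiffOn ℝ 3 (fun x' => b x' y) (closure X) :=
      hb.comp ((contDiff_id.prodMk contDiff_const).contDiffOn) (fun x' hx' => ⟨hx', hy⟩)
    exact h1.contDiffAt (mem_of_superset (hXopen.mem_nhds (hcX t ht)) subset_closure)
  -- identification of F₁ on (interior I) × J
  have hF₁val : ∀ σ ∈ J, ∀ t ∈ interior I,
      F₁ (t, σ) = ⟪gradient (fun x' => b x' (yc σ)) (c t), deriv c t⟫ := by
    intro σ hσ t ht
    have hmemD : ((t, σ) : ℝ × ℝ) ∈ D := ⟨interior_subset ht, hσ⟩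
    have hD1 : DifferentiableWithinAt ℝ B D (t, σ) :=
      (hBsm _ hmemD).differentiableWithinAt (by norm_num)
    have h1 : HasDerivAt (fun t' => B (t', σ)) (F₁ (t, σ)) t :=
      slice_fst_hasDerivAt hD1 (mem_interior_iff_mem_nhds.1 ht) hσ
    have h2 : HasDerivAt (fun t' => b (c t') (yc σ))
        ⟪gradient (fun x' => b x' (yc σ)) (c t), deriv c t⟫ t :=
      hasDerivAt_comp_gradient
        (((hslice _ (hycY σ hσ) t (hIU (interior_subset ht)))).differentiableAt (by norm_num))
        (hcderiv t (hIU (interior_subset ht)))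
    exact h1.unique h2
  -- identification of G on {t₀} × J
  have hGval : ∀ σ ∈ J, G (t₀, σ) =
      ⟪gradient (fun x' => b x' (yc σ)) x, cdd⟫ +
        ⟪(fderiv ℝ (gradient (fun x' => b x' (yc σ))) x) ξ, ξ⟫ := by
    intro σ hσ
    have hmemD : ((t₀, σ) : ℝ × ℝ) ∈ D := ⟨ht₀I, hσ⟩
    have hD1 : DifferentiableWithinAt ℝ F₁ D (t₀, σ) :=
      (hF₁sm _ hmemD).differentiableWithinAt (by norm_num)
    have h1 : HasDerivAt (fun t' => F₁ (t', σ)) (G (t₀, σ)) t₀ :=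
      slice_fst_hasDerivAt hD1 hIt₀ hσ
    have h2 : HasDerivAt (fun t => ⟪gradient (fun x' => b x' (yc σ)) (c t), deriv c t⟫)
        (⟪gradient (fun x' => b x' (yc σ)) x, cdd⟫ +
          ⟪(fderiv ℝ (gradient (fun x' => b x' (yc σ))) x) ξ, ξ⟫) t₀ :=
      hasDerivAt_inner_gradient
        ((hslice _ (hycY σ hσ) t₀ ht₀).of_le (by norm_num)) (hccd t₀ ht₀)
    have hev : (fun t' => F₁ (t', σ)) =ᶠ[𝓝 t₀]
        (fun t => ⟪gradient (fun x' => b x' (yc σ)) (c t), deriv c t⟫) := by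
      filter_upwards [isOpen_interior.mem_nhds ht₀int] with t ht using hF₁val σ hσ t ht
    have h1' : HasDerivAt (fun t => ⟪gradient (fun x' => b x' (yc σ)) (c t), deriv c t⟫)
        (G (t₀, σ)) t₀ := h1.congr_of_eventuallyEq hev.symm
    exact h1'.unique h2
  -- second-derivative symmetry swaps
  have hq₀D : ((t₀, (0:ℝ)) : ℝ × ℝ) ∈ D := ⟨ht₀I, h0J⟩
  have hclint : ∀ q ∈ D, q ∈ closure (interior D) := fun q hq => by rw [hDcl]; exact hq
  have hswap1 : ∀ q ∈ D, fderivWithin ℝ F₁ D q (0, 1) = fderivWithin ℝ F₂ D q (1, 0) := by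
    intro q hq
    have hsymm : IsSymmSndFDerivWithinAt ℝ B D q :=
      (hBsm q hq).isSymmSndFDerivWithinAt (by norm_num) hDuniq (hclint q hq) hq
    have hdBq : DifferentiableWithinAt ℝ (fderivWithin ℝ B D) D q :=
      (hdB q hq).differentiableWithinAt (by norm_num)
    have e1 : fderivWithin ℝ F₁ D q (0, 1) =
        fderivWithin ℝ (fderivWithin ℝ B D) D q (0, 1) (1, 0) := by
      have h := fderivWithin_clm_apply (hDuniq q hq) hdBq
        (differentiableWithinAt_const (((1:ℝ), (0:ℝ)) : ℝ × ℝ))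
      rw [hF₁def]
      simp [h, fderivWithin_const_apply]
    have e2 : fderivWithin ℝ F₂ D q (1, 0) =
        fderivWithin ℝ (fderivWithin ℝ B D) D q (1, 0) (0, 1) := by
      have h := fderivWithin_clm_apply (hDuniq q hq) hdBq
        (differentiableWithinAt_const (((0:ℝ), (1:ℝ)) : ℝ × ℝ))
      rw [hF₂def]
      simp [h, fderivWithin_const_apply]
    rw [e1, e2, hsymm.eq]
  have hswap2 : fderivWithin ℝ G D (t₀, 0) (0, 1) = fderivWithin ℝ J₂ D (t₀, 0) (1, 0) := by
    have hsymmF₁ : IsSymmSndFDerivWithinAt ℝ F₁ D (t₀, 0) :=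
      (hF₁sm _ hq₀D).isSymmSndFDerivWithinAt (by norm_num) hDuniq (hclint _ hq₀D) hq₀D
    have hdF₁q : DifferentiableWithinAt ℝ (fderivWithin ℝ F₁ D) D (t₀, 0) :=
      (hdF₁ _ hq₀D).differentiableWithinAt (by norm_num)
    have e3 : fderivWithin ℝ G D (t₀, 0) (0, 1) =
        fderivWithin ℝ (fderivWithin ℝ F₁ D) D (t₀, 0) (0, 1) (1, 0) := by
      have h := fderivWithin_clm_apply (hDuniq _ hq₀D) hdF₁q
        (differentiableWithinAt_const (((1:ℝ), (0:ℝ)) : ℝ × ℝ))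
      rw [hGdef]
      simp [h, fderivWithin_const_apply]
    have e4 : fderivWithin ℝ (fderivWithin ℝ F₁ D) D (t₀, 0) (1, 0) (0, 1) =
        fderivWithin ℝ (fun q => fderivWithin ℝ F₁ D q (0, 1)) D (t₀, 0) (1, 0) := by
      have h := fderivWithin_clm_apply (hDuniq _ hq₀D) hdF₁q
        (differentiableWithinAt_const (((0:ℝ), (1:ℝ)) : ℝ × ℝ))
      simp [h, fderivWithin_const_apply]
    have e5 : fderivWithin ℝ (fun q => fderivWithin ℝ F₁ D q (0, 1)) D (t₀, 0) =
        fderivWithin ℝ J₂ D (t₀, 0) := by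
      apply fderivWithin_congr
      · intro q hq
        rw [hJ₂def]
        exact hswap1 q hq
      · rw [hJ₂def]
        exact hswap1 _ hq₀D
    rw [e3, hsymmF₁.eq, e4, e5]
  -- the within-derivative of yc at 0
  set w := derivWithin yc J 0 with hwdef
  have hycd : HasDerivWithinAt yc w J 0 :=
    ((hycsm 0 h0J).differentiableWithinAt (by simp)).hasDerivWithinAt
  -- identification of F₂ on the bottom edge at good points
  have hgood : ∀ t ∈ interior I, t ∉ {t | t ∈ U ∧ ¬ DifferentiableAt ℝ (fun y => b (c t) y) y₀} →
      F₂ (t, 0) = ⟪bYd b (c t) y₀, w⟫ := by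
    intro t ht htb
    have htU : t ∈ U := hIU (interior_subset ht)
    have hdiff : DifferentiableAt ℝ (fun y => b (c t) y) y₀ := by
      by_contra hcon
      exact htb ⟨htU, hcon⟩
    have h1 : HasDerivWithinAt (fun σ => B (t, σ)) (F₂ (t, 0)) J 0 :=
      slice_snd_hasDerivWithinAt
        ((hBsm _ ⟨interior_subset ht, h0J⟩).differentiableWithinAt (by norm_num))
        (interior_subset ht)
    have hfd : HasFDerivAt (fun y => b (c t) y)
        ((InnerProductSpace.toDual ℝ _) (gradient (fun y => b (c t) y) y₀)) y₀ :=
      hasGradientAt_iff_hasFDerivAt.1 hdiff.hasGradientAt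
    rw [← hyc0] at hfd
    have h2 : HasDerivWithinAt (fun σ => b (c t) (yc σ))
        ((InnerProductSpace.toDual ℝ _) (gradient (fun y => b (c t) y) y₀) w) J 0 := by
      have h2' := hfd.comp_hasDerivWithinAt 0 hycd
      rw [hyc0] at h2'; exact h2'
    have h3 := hasDerivWithinAt_unique (uniqueDiffOn_Icc one_pos 0 h0J) h1 h2
    rw [h3, InnerProductSpace.toDual_apply_apply]
    rfl
  -- the bottom edge value of F₂ is affine in t
  have hηA : ∀ t ∈ interior I, F₂ (t, 0) = ⟪z₀ + t • dz, w⟫ := by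
    intro t ht
    have hηcont : ContinuousOn (fun t' => F₂ (t', 0)) I :=
      (hF₂sm.continuousOn).comp
        ((continuous_id.prodMk continuous_const).continuousOn) (fun t' ht' => ⟨ht', h0J⟩)
    refine eq_of_continuousAt_of_subsingleton_exception
      (f := fun t' => F₂ (t', 0)) (g := fun t' : ℝ => (⟪z₀ + t' • dz, w⟫ : ℝ)) hbad
      (hηcont.continuousAt (mem_interior_iff_mem_nhds.1 ht)) ?_ ?_
    · exact ((continuous_const.add (continuous_id.smul continuous_const)).inner
        continuous_const).continuousAt
    · filter_upwards [isOpen_interior.mem_nhds ht] with t' ht' htb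
      rw [hgood t' ht' htb, haff t' (hIU (interior_subset ht'))]
  -- hence the t-derivative of the bottom edge of F₂ is constant
  have hAd : ∀ s : ℝ, HasDerivAt (fun t : ℝ => (⟪z₀ + t • dz, w⟫ : ℝ)) ⟪dz, w⟫ s := by
    intro s
    have h1 : HasDerivAt (fun t : ℝ => z₀ + t • dz) dz s := by
      simpa using ((hasDerivAt_id s).smul_const dz).const_add z₀
    have h2 := h1.inner ℝ (hasDerivAt_const s w)
    simpa using h2
  have hη₁val : ∀ t ∈ interior I, J₂ (t, 0) = ⟪dz, w⟫ := by
    intro t ht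
    have hηd : HasDerivAt (fun t' => F₂ (t', 0)) (J₂ (t, 0)) t :=
      slice_fst_hasDerivAt
        ((hF₂sm _ ⟨interior_subset ht, h0J⟩).differentiableWithinAt (by norm_num))
        (mem_interior_iff_mem_nhds.1 ht) h0J
    have hev : (fun t' => F₂ (t', 0)) =ᶠ[𝓝 t] (fun t' => (⟪z₀ + t' • dz, w⟫ : ℝ)) := by
      filter_upwards [isOpen_interior.mem_nhds ht] with t' ht' using hηA t' ht'
    exact (hηd.congr_of_eventuallyEq hev.symm).unique (hAd t)
  have hT0 : fderivWithin ℝ J₂ D (t₀, 0) (1, 0) = 0 := by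
    have hη₁d : HasDerivAt (fun t' => J₂ (t', 0)) (fderivWithin ℝ J₂ D (t₀, 0) (1, 0)) t₀ :=
      slice_fst_hasDerivAt ((hJ₂sm _ hq₀D).differentiableWithinAt one_ne_zero) hIt₀ h0J
    have hev2 : (fun t' => J₂ (t', 0)) =ᶠ[𝓝 t₀] (fun _ => (⟪dz, w⟫ : ℝ)) := by
      filter_upwards [isOpen_interior.mem_nhds ht₀int] with t' ht' using hη₁val t' ht'
    exact (hη₁d.congr_of_eventuallyEq hev2.symm).unique (hasDerivAt_const t₀ _)
  -- within derivative of α at 0 vanishes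
  have hαd : HasDerivWithinAt (fun σ => G (t₀, σ)) (fderivWithin ℝ G D (t₀, 0) (0, 1)) J 0 :=
    slice_snd_hasDerivWithinAt ((hGsm _ hq₀D).differentiableWithinAt one_ne_zero) ht₀I
  have hαd0 : HasDerivWithinAt (fun σ => G (t₀, σ)) 0 J 0 := by
    rwa [hswap2, hT0] at hαd
  -- identification of α with the B3 convex function
  have hGφ : ∀ σ ∈ J, G (t₀, σ) = ⟪ξ, Hxx b x (Ymap x (pc σ)) ξ⟫ + ⟪pc σ, cdd⟫ := by
    intro σ hσ
    rw [hGval σ hσ]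
    have e1 : gradient (fun x' => b x' (yc σ)) x = pc σ := hbXyc σ hσ
    have e2 : fderiv ℝ (gradient (fun x' => b x' (yc σ))) x = Hxx b x (Ymap x (pc σ)) := by
      rw [← hycYm σ hσ]; rfl
    rw [e1, e2, real_inner_comm ((Hxx b x (Ymap x (pc σ))) ξ) ξ]
    ring
  have hφconv : ConvexOn ℝ K (fun p => ⟪ξ, Hxx b x (Ymap x p) ξ⟫ + ⟪p, cdd⟫) := by
    have h1 := hB3 x hxcl ξ
    have h2 : ConvexOn ℝ K (fun p => (⟪p, cdd⟫ : ℝ)) := by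
      refine ⟨hKconv, ?_⟩
      intro p hp q hq a b' ha hb' hab
      simp only [inner_add_left, real_inner_smul_left, smul_eq_mul]
      exact le_of_eq (by ring)
    exact h1.add h2
  have hαconv : ConvexOn ℝ J (fun σ => G (t₀, σ)) := by
    have h3 := hφconv.comp_affineMap (AffineMap.lineMap p₀ p₁ : ℝ →ᵃ[ℝ] _)
    have hlm : ∀ σ : ℝ, (AffineMap.lineMap p₀ p₁ : ℝ →ᵃ[ℝ] _) σ = pc σ := by
      intro σ
      rw [AffineMap.lineMap_apply_module]
      simp only [hpcdef]
      module
    have hsub : J ⊆ (AffineMap.lineMap p₀ p₁ : ℝ →ᵃ[ℝ] _) ⁻¹' K := by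
      intro σ hσ
      simp only [Set.mem_preimage, hlm σ]
      exact hpicc σ hσ
    have h4 := h3.subset hsub (convex_Icc 0 1)
    refine ⟨convex_Icc 0 1, ?_⟩
    intro σ hσ τ hτ a b' ha hb' hab
    have hcomb : a • σ + b' • τ ∈ J := (convex_Icc (0:ℝ) 1) hσ hτ ha hb' hab
    have h5 := h4.2 hσ hτ ha hb' hab
    simp only [Function.comp_apply, hlm] at h5
    show G (t₀, a • σ + b' • τ) ≤ a • G (t₀, σ) + b' • G (t₀, τ)
    rw [hGφ _ hσ, hGφ _ hτ, hGφ _ hcomb]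
    exact h5
  -- slope comparison
  have hslopele : ∀ s ∈ Ioc (0:ℝ) 1,
      (G (t₀, s) - G (t₀, 0)) / s ≤ G (t₀, 1) - G (t₀, 0) := by
    intro s hs
    have h6 := hαconv.secant_mono (a := 0) (x := s) (y := 1) h0J
      ⟨le_of_lt hs.1, hs.2⟩ h1J (ne_of_gt hs.1) one_ne_zero hs.2
    simpa using h6
  have hneB : (𝓝[J \ {0}] (0:ℝ)).NeBot := by
    have hJd : J \ {0} = Ioc (0:ℝ) 1 := Icc_diff_left
    rw [hJd]
    apply mem_closure_iff_nhdsWithin_neBot.1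
    rw [closure_Ioc (one_ne_zero).symm]
    exact ⟨le_refl _, zero_le_one⟩
  have htend : Tendsto (slope (fun σ => G (t₀, σ)) 0) (𝓝[J \ {0}] 0) (𝓝 0) :=
    hasDerivWithinAt_iff_tendsto_slope.1 hαd0
  have hkey : (0:ℝ) ≤ G (t₀, 1) - G (t₀, 0) := by
    refine le_of_tendsto htend ?_
    filter_upwards [self_mem_nhdsWithin] with s hs
    have hs' : s ∈ Ioc (0:ℝ) 1 := by
      rw [← Icc_diff_left]; exact hs
    have h7 := hslopele s hs'
    have h8 : slope (fun σ => G (t₀, σ)) 0 s = (G (t₀, s) - G (t₀, 0)) / s := by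
      rw [slope_def_field]
      simp
    rw [h8]
    exact h7
  have hfinal : G (t₀, 0) ≤ G (t₀, 1) := by linarith
  rw [hGφ 0 h0J, hGφ 1 h1J] at hfinal
  have hY0 : Ymap x p₀ = y₀ := hYx.1 y₀ hy₀
  rw [hpc0, hpc1, hY0] at hfinal
  exact hfinal

end Core

open Set Filter Topology in
/-- **Lemma 1(ii): convexity of sections.** Under the hypotheses of the coordinate-change
lemma, if `y₀` is a `b`-support of `u` at `x₀` (i.e. `u ≥ u(x₀) + b(·,y₀) − b(x₀,y₀)`),
then for every `h ≥ 0` the image under `Φ = b_y(·,y₀)` of the section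
`{x ∈ X : u(x) − u(x₀) − b(x,y₀) + b(x₀,y₀) < h}` is convex. -/
theorem sections_are_convex {n : ℕ}
    (X Y : Set (EuclideanSpace ℝ (Fin n)))
    (hXopen : IsOpen X) (hXbdd : Bornology.IsBounded X)
    (hYopen : IsOpen Y) (hYbdd : Bornology.IsBounded Y)
    (b : EuclideanSpace ℝ (Fin n) → EuclideanSpace ℝ (Fin n) → ℝ)
    (hb : ContDiffOn ℝ 3 (Function.uncurry b) (closure X ×ˢ closure Y))
    (hB1 : CondB1 b X Y)
    (Ymap : EuclideanSpace ℝ (Fin n) → EuclideanSpace ℝ (Fin n) → EuclideanSpace ℝ (Fin n))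
    (hY : IsYmap b X Y Ymap)
    (hB3 : CondB3 b X Y Ymap)
    (y₀ : EuclideanSpace ℝ (Fin n)) (hy₀ : y₀ ∈ closure Y)
    (Φ Ψ : EuclideanSpace ℝ (Fin n) → EuclideanSpace ℝ (Fin n))
    (hΦ : ∀ x, Φ x = bYd b x y₀)
    (Xt : Set (EuclideanSpace ℝ (Fin n)))
    (hXt : Φ '' X = Xt) (hXt_open : IsOpen Xt) (hXt_conv : Convex ℝ Xt)
    (hΦinj : Set.InjOn Φ X) (hΨ : Set.LeftInvOn Ψ Φ X)
    (hΨ_smooth : ContDiffOn ℝ 1 Ψ Xt)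
    (u : EuclideanSpace ℝ (Fin n) → ℝ) (hu_C2 : ContDiffOn ℝ 2 u X)
    (hgrad : ∀ x ∈ X, gradient u x ∈ (fun y => bX b x y) '' closure Y)
    (hhess : ∀ x ∈ X, ∀ ξ : EuclideanSpace ℝ (Fin n),
      ⟪ξ, Hxx b x (Ymap x (gradient u x)) ξ⟫ ≤ ⟪ξ, fderiv ℝ (gradient u) x ξ⟫)
    (x₀ : EuclideanSpace ℝ (Fin n)) (hx₀ : x₀ ∈ X)
    (hsupport : ∀ x ∈ X, u x₀ + b x y₀ - b x₀ y₀ ≤ u x) :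
    ∀ h : ℝ, 0 ≤ h →
      Convex ℝ (Φ '' {x ∈ X | u x - u x₀ - b x y₀ + b x₀ y₀ < h}) := by
  intro h hh
  intro z₀ hz₀ z₁ hz₁ a a' ha ha' haa
  by_cases hzz : z₀ = z₁
  · rw [hzz, ← add_smul, haa, one_smul]
    exact hz₁
  -- notation
  set S := {x ∈ X | u x - u x₀ - b x y₀ + b x₀ y₀ < h} with hSdef
  have hSX : S ⊆ X := fun x' hx' => hx'.1
  obtain ⟨hB11, hB12⟩ := hB1
  obtain ⟨hΦ'sm, g₂, hg₂li, hg₂sm⟩ := hB12 y₀ hy₀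
  have hz₀Xt : z₀ ∈ Xt := by
    rw [← hXt]; exact Set.image_mono hSX hz₀
  have hz₁Xt : z₁ ∈ Xt := by
    rw [← hXt]; exact Set.image_mono hSX hz₁
  have hXtsub : ∀ z ∈ Xt, Ψ z ∈ X ∧ Φ (Ψ z) = z := by
    intro z hz
    rw [← hXt] at hz
    obtain ⟨x', hx', rfl⟩ := hz
    rw [hΨ hx']
    exact ⟨hx', rfl⟩
  have hΨg₂ : ∀ z ∈ Xt, Ψ z = g₂ z := by
    intro z hz
    rw [← hXt] at hz
    obtain ⟨x', hx', rfl⟩ := hz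
    rw [hΨ hx']
    have h1 : g₂ ((fun x'' => bYd b x'' y₀) x') = x' := hg₂li (subset_closure hx')
    rw [hΦ x']
    exact h1.symm
  have hΨsm : ∀ z ∈ Xt, ContDiffAt ℝ ((⊤ : ℕ∞) : WithTop ℕ∞) Ψ z := by
    intro z hz
    have hsub2 : Xt ⊆ (fun x'' => bYd b x'' y₀) '' closure X := by
      rw [← hXt]
      intro w hw
      obtain ⟨x', hx', rfl⟩ := hw
      exact ⟨x', subset_closure hx', (hΦ x').symm⟩
    have h1 : (fun x'' => bYd b x'' y₀) '' closure X ∈ 𝓝 z :=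
      Filter.mem_of_superset (hXt_open.mem_nhds hz) hsub2
    have h2 : ContDiffAt ℝ ((⊤ : ℕ∞) : WithTop ℕ∞) g₂ z :=
      (hg₂sm z (hsub2 hz)).contDiffAt h1
    apply h2.congr_of_eventuallyEq
    filter_upwards [hXt_open.mem_nhds hz] with w hw using hΨg₂ w hw
  -- the segment and the curve
  set γ := fun t : ℝ => z₀ + t • (z₁ - z₀) with hγdef
  have hγcont : Continuous γ := by
    apply continuous_const.add
    exact continuous_id.smul continuous_const
  have hγXt : ∀ t ∈ Set.Icc (0:ℝ) 1, γ t ∈ Xt := by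
    intro t ht
    have h1 := hXt_conv hz₀Xt hz₁Xt (by linarith [ht.2] : (0:ℝ) ≤ 1 - t) ht.1 (by ring)
    have h2 : (1 - t) • z₀ + t • z₁ = γ t := by
      simp only [hγdef]; module
    rwa [h2] at h1
  set U := γ ⁻¹' Xt with hUdef
  have hUopen : IsOpen U := hXt_open.preimage hγcont
  have hIccU : Set.Icc (0:ℝ) 1 ⊆ U := fun t ht => hγXt t ht
  set c := fun t : ℝ => Ψ (γ t) with hcdef
  have hγU : ∀ t ∈ U, γ t ∈ Xt := fun t ht => ht
  have hcX : ∀ t ∈ U, c t ∈ X := fun t ht => (hXtsub _ (hγU t ht)).1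
  have hΦc : ∀ t ∈ U, Φ (c t) = γ t := fun t ht => (hXtsub _ (hγU t ht)).2
  have haff : ∀ t ∈ U, bYd b (c t) y₀ = z₀ + t • (z₁ - z₀) := by
    intro t ht
    rw [← hΦ (c t)]
    exact hΦc t ht
  have hccd : ∀ t ∈ U, ContDiffAt ℝ ((⊤ : ℕ∞) : WithTop ℕ∞) c t := by
    intro t ht
    have hγsm : ContDiffAt ℝ (⊤ : WithTop ℕ∞) γ t := by
      apply ContDiffAt.add contDiffAt_const
      exact (contDiff_id.smul contDiff_const).contDiffAt
    exact (hΨsm _ (hγU t ht)).comp t (hγsm.of_le le_top)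
  -- the bad set is a subsingleton
  have hbad : {t | t ∈ U ∧ ¬ DifferentiableAt ℝ (fun y => b (c t) y) y₀}.Subsingleton := by
    intro s hs t ht
    have h0s : Φ (c s) = 0 := by
      rw [hΦ]
      exact gradient_eq_zero_of_not_differentiableAt hs.2
    have h0t : Φ (c t) = 0 := by
      rw [hΦ]
      exact gradient_eq_zero_of_not_differentiableAt ht.2
    have hst : γ s = γ t := by
      rw [← hΦc s hs.1, ← hΦc t ht.1, h0s, h0t]
    have hv : z₁ - z₀ ≠ 0 := sub_ne_zero.2 (Ne.symm hzz)
    have h1 : s • (z₁ - z₀) = t • (z₁ - z₀) := by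
      have := hst
      simp only [hγdef] at this
      exact add_left_cancel this
    exact smul_left_injective ℝ hv h1
  -- derivatives of the section function along the curve
  have hcderiv : ∀ t ∈ U, HasDerivAt c (deriv c t) t := fun t ht =>
    ((hccd t ht).differentiableAt (by simp)).hasDerivAt
  have huAt : ∀ t ∈ U, ContDiffAt ℝ 2 u (c t) := fun t ht =>
    hu_C2.contDiffAt (Filter.mem_of_superset (hXopen.mem_nhds (hcX t ht)) Set.Subset.rfl)
  have hbslice : ∀ t ∈ U, ContDiffAt ℝ 3 (fun x' => b x' y₀) (c t) := by
    intro t ht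
    have h1 : ContDiffOn ℝ 3 (fun x' => b x' y₀) (closure X) :=
      hb.comp ((contDiff_id.prodMk contDiff_const).contDiffOn) (fun x' hx' => ⟨hx', hy₀⟩)
    exact h1.contDiffAt (Filter.mem_of_superset (hXopen.mem_nhds (hcX t ht)) subset_closure)
  set g₁ := fun t => u (c t) - b (c t) y₀ with hg₁def
  set q1 := fun t => (⟪gradient u (c t), deriv c t⟫ : ℝ) -
      ⟪gradient (fun x' => b x' y₀) (c t), deriv c t⟫ with hq1def
  have hg₁d : ∀ t ∈ U, HasDerivAt g₁ (q1 t) t := by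
    intro t ht
    exact (hasDerivAt_comp_gradient ((huAt t ht).differentiableAt two_ne_zero)
      (hcderiv t ht)).sub
      (hasDerivAt_comp_gradient (((hbslice t ht)).differentiableAt (by norm_num))
        (hcderiv t ht))
  set q2 := fun t => ((⟪gradient u (c t), deriv (deriv c) t⟫ : ℝ) +
      ⟪(fderiv ℝ (gradient u) (c t)) (deriv c t), deriv c t⟫) -
      ((⟪gradient (fun x' => b x' y₀) (c t), deriv (deriv c) t⟫ : ℝ) +
      ⟪(Hxx b (c t) y₀) (deriv c t), deriv c t⟫) with hq2def
  have hq1d : ∀ t ∈ U, HasDerivAt q1 (q2 t) t := by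
    intro t ht
    exact (hasDerivAt_inner_gradient (huAt t ht) (hccd t ht)).sub
      (hasDerivAt_inner_gradient ((hbslice t ht).of_le (by norm_num)) (hccd t ht))
  -- non-negativity of the second derivative
  have hq2pos : ∀ t ∈ U, 0 ≤ q2 t := by
    intro t ht
    have hx : c t ∈ X := hcX t ht
    have hmain := main_ineq X Y hXopen b hb hB11 Ymap hY hB3 y₀ hy₀ c U hUopen hccd hcX
      z₀ (z₁ - z₀) haff hbad t ht (gradient u (c t)) (hgrad (c t) hx)
    have hh2 := hhess (c t) hx (deriv c t)
    have e1 : (⟪(fderiv ℝ (gradient u) (c t)) (deriv c t), deriv c t⟫ : ℝ) =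
        ⟪deriv c t, (fderiv ℝ (gradient u) (c t)) (deriv c t)⟫ := real_inner_comm _ _
    have e2 : (⟪(Hxx b (c t) y₀) (deriv c t), deriv c t⟫ : ℝ) =
        ⟪deriv c t, (Hxx b (c t) y₀) (deriv c t)⟫ := real_inner_comm _ _
    have e3 : gradient (fun x' => b x' y₀) (c t) = bX b (c t) y₀ := rfl
    simp only [hq2def, e1, e2, e3]
    linarith
  -- convexity of g₁ on [0,1]
  have hderiv_eq : ∀ t ∈ U, deriv g₁ t = q1 t := fun t ht => (hg₁d t ht).deriv
  have hcont : ContinuousOn g₁ (Set.Icc (0:ℝ) 1) := fun t ht =>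
    ((hg₁d t (hIccU ht)).continuousAt).continuousWithinAt
  have hdiff1 : DifferentiableOn ℝ g₁ (interior (Set.Icc (0:ℝ) 1)) := by
    intro t ht
    rw [interior_Icc] at ht
    exact ((hg₁d t (hIccU (Set.Ioo_subset_Icc_self ht))).differentiableAt).differentiableWithinAt
  have hdiff2 : DifferentiableOn ℝ (deriv g₁) (interior (Set.Icc (0:ℝ) 1)) := by
    intro t ht
    rw [interior_Icc] at ht
    have htU : t ∈ U := hIccU (Set.Ioo_subset_Icc_self ht)
    have h1 : DifferentiableAt ℝ q1 t := (hq1d t htU).differentiableAt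
    have hev : deriv g₁ =ᶠ[𝓝 t] q1 := by
      filter_upwards [hUopen.mem_nhds htU] with s hs using hderiv_eq s hs
    exact (h1.congr_of_eventuallyEq hev).differentiableWithinAt
  have hder2 : ∀ t ∈ interior (Set.Icc (0:ℝ) 1), 0 ≤ deriv^[2] g₁ t := by
    intro t ht
    rw [interior_Icc] at ht
    have htU : t ∈ U := hIccU (Set.Ioo_subset_Icc_self ht)
    have hev : deriv g₁ =ᶠ[𝓝 t] q1 := by
      filter_upwards [hUopen.mem_nhds htU] with s hs using hderiv_eq s hs
    have h1 : deriv (deriv g₁) t = deriv q1 t := hev.deriv_eq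
    have h2 : deriv q1 t = q2 t := (hq1d t htU).deriv
    show 0 ≤ deriv (deriv g₁) t
    rw [h1, h2]
    exact hq2pos t htU
  have hcvx : ConvexOn ℝ (Set.Icc (0:ℝ) 1) g₁ :=
    convexOn_of_deriv2_nonneg (convex_Icc 0 1) hcont hdiff1 hdiff2 hder2
  -- wrap up
  obtain ⟨xa, hxaS, hza⟩ := hz₀
  obtain ⟨xb, hxbS, hzb⟩ := hz₁
  have hγ0 : γ 0 = z₀ := by simp [hγdef]
  have hγ1 : γ 1 = z₁ := by simp [hγdef]
  have hc0 : c 0 = xa := by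
    show Ψ (γ 0) = xa
    rw [hγ0, ← hza, hΨ hxaS.1]
  have hc1 : c 1 = xb := by
    show Ψ (γ 1) = xb
    rw [hγ1, ← hzb, hΨ hxbS.1]
  have h0Icc : (0:ℝ) ∈ Set.Icc (0:ℝ) 1 := ⟨le_refl _, zero_le_one⟩
  have h1Icc : (1:ℝ) ∈ Set.Icc (0:ℝ) 1 := ⟨zero_le_one, le_refl _⟩
  have ha'Icc : a' ∈ Set.Icc (0:ℝ) 1 := ⟨ha', by linarith⟩
  have hcomb := hcvx.2 h0Icc h1Icc ha ha' haa
  have hpt : a • (0:ℝ) + a' • (1:ℝ) = a' := by simp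
  rw [hpt] at hcomb
  have hg₁0 : g₁ 0 < h + u x₀ - b x₀ y₀ := by
    have := hxaS.2
    simp only [hg₁def, hc0]
    linarith
  have hg₁1 : g₁ 1 < h + u x₀ - b x₀ y₀ := by
    have := hxbS.2
    simp only [hg₁def, hc1]
    linarith
  have hlt : g₁ a' < h + u x₀ - b x₀ y₀ := by
    rcases eq_or_lt_of_le ha with hA | hA
    · have haa' : a' = 1 := by linarith
      have h9 : a • g₁ 0 + a' • g₁ 1 < h + u x₀ - b x₀ y₀ := by
        rw [← hA, haa']
        simpa using hg₁1
      linarith [hcomb]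
    · have h8 : a • g₁ 0 < a • (h + u x₀ - b x₀ y₀) := by
        exact (smul_lt_smul_iff_of_pos_left hA).2 hg₁0
      have h9 : a' • g₁ 1 ≤ a' • (h + u x₀ - b x₀ y₀) := by
        apply smul_le_smul_of_nonneg_left (le_of_lt hg₁1) ha'
      have h10 : a • (h + u x₀ - b x₀ y₀) + a' • (h + u x₀ - b x₀ y₀) =
          h + u x₀ - b x₀ y₀ := by
        rw [← add_smul, haa, one_smul]
      linarith [hcomb]
  refine ⟨c a', ⟨hcX a' (hIccU ha'Icc), by simp only [hg₁def] at hlt; linarith⟩, ?_⟩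
  rw [hΦc a' (hIccU ha'Icc)]
  have : a • z₀ + a' • z₁ = γ a' := by
    have hA : a = 1 - a' := by linarith
    rw [hA]
    simp only [hγdef]
    module
  rw [this]

end
end
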